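/- arXiv:1503.02834 — 9 statements merged into one kernel-verified Lean document; each statement's English description precedes it below -/
import Mathlib

section
/- Let ν be a target policy over finite action set A with ν(x,a,r) = D(x)ν(a|x)D(r|x,a), let μ_k(x,a,r) = D(x)μ_k(a|x)D(r|x,a) be the exploration distribution at step k (conditioned on the history), let r*(x,a) = E_D[r|x,a], Δ(x,a) = r̂(x,a) − r*(x,a), and ρ_k(x,a) = μ_k(a|x)/μ̂_k(a|x). Then the conditional expectation of the doubly robust term V̂_k = Σ_{a'} ν(a'|x_k) r̂(x_k,a') + (ν(a_k|x_k)/μ̂_k(a_k|x_k))·(r_k − r̂(x_k,a_k)) with (x_k,a_k,r_k) ∼ μ_k equals E_{(x,a)∼ν}[ r*(x,a) + (1 − ρ_k(x,a))·Δ(x,a) ]. -/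
/-!
Averaging `V̂` over the reward replaces `r` by `r*(x,a)`; averaging over `a ∼ μ(·|x)` leaves the
direct term `∑ ν r̂` unchanged and turns the correction weight `μ · ν/μ̂` into `ν ρ`. What remains
is the pointwise identity `r̂ + ρ (r* − r̂) = r* + (1 − ρ) Δ`.
-/

open Finset

section Expectation

variable {ι : Type*} [Fintype ι] {p : ι → ℝ}

theorem sum_mul_const_add (hp : ∑ i, p i = 1) (c : ℝ) (f : ι → ℝ) :
    ∑ i, p i * (c + f i) = c + ∑ i, p i * f i := by
  simp only [mul_add, sum_add_distrib, ← sum_mul, hp, one_mul]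

theorem sum_mul_const_add_mul_sub (hp : ∑ i, p i = 1) (c w b : ℝ) (g : ι → ℝ) :
    ∑ i, p i * (c + w * (g i - b)) = c + w * (∑ i, p i * g i - b) := by
  rw [sum_mul_const_add hp]
  simp only [mul_left_comm (p _) w, ← mul_sum, mul_sub, sum_sub_distrib, ← sum_mul, hp, one_mul]

end Expectation

theorem stmt1_general {X A R : Type*} [Fintype X] [Fintype A] [Fintype R]
    (D : X → ℝ) (nu : X → A → ℝ) (mu : X → A → ℝ)
    (Dr : X → A → R → ℝ) (rval : R → ℝ)
    (rhat : X → A → ℝ) (muhat : X → A → ℝ)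
    (hmu1 : ∀ x, ∑ a, mu x a = 1)
    (hDr1 : ∀ x a, ∑ r, Dr x a r = 1)
    (rstar : X → A → ℝ) (hrstar : ∀ x a, rstar x a = ∑ r, Dr x a r * rval r)
    (Δ : X → A → ℝ) (hΔ : ∀ x a, Δ x a = rhat x a - rstar x a)
    (ρ : X → A → ℝ) (hρ : ∀ x a, ρ x a = mu x a / muhat x a)
    (Vhat : X → A → R → ℝ)
    (hVhat : ∀ x a r, Vhat x a r =
      (∑ a', nu x a' * rhat x a') + (nu x a / muhat x a) * (rval r - rhat x a)) :
    ∑ x, ∑ a, ∑ r, D x * (mu x a * (Dr x a r * Vhat x a r))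
      = ∑ x, ∑ a, D x * (nu x a * (rstar x a + (1 - ρ x a) * Δ x a)) := by
  have hreward : ∀ x a, ∑ r, Dr x a r * Vhat x a r
      = ∑ a', nu x a' * rhat x a' + nu x a / muhat x a * (rstar x a - rhat x a) := by
    intro x a
    simp only [hVhat, sum_mul_const_add_mul_sub (hDr1 x a), ← hrstar]
  have haction : ∀ x,
      ∑ a, mu x a * (∑ a', nu x a' * rhat x a' + nu x a / muhat x a * (rstar x a - rhat x a))
      = ∑ a, nu x a * (rstar x a + (1 - ρ x a) * Δ x a) := by
    intro x
    have hpoint : ∀ a, nu x a * (rstar x a + (1 - ρ x a) * Δ x a)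
        = nu x a * rhat x a + mu x a * (nu x a / muhat x a * (rstar x a - rhat x a)) := by
      intro a
      rw [hρ, hΔ]
      ring
    rw [sum_mul_const_add (hmu1 x), sum_congr rfl fun a _ => hpoint a, sum_add_distrib]
  simp_rw [← mul_sum, hreward, haction]

/-- Expectation of the doubly robust term:
`E_{μ_k}[V̂_k] = E_{(x,a)∼ν}[ r*(x,a) + (1 − ρ_k(x,a))·Δ(x,a) ]`. -/
theorem stmt1 {X A R : Type*} [Fintype X] [Fintype A] [Fintype R]
    (D : X → ℝ) (nu : X → A → ℝ) (mu : X → A → ℝ)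
    (Dr : X → A → R → ℝ) (rval : R → ℝ)
    (rhat : X → A → ℝ) (muhat : X → A → ℝ)
    (hD0 : ∀ x, 0 ≤ D x) (hD1 : ∑ x, D x = 1)
    (hnu0 : ∀ x a, 0 ≤ nu x a) (hnu1 : ∀ x, ∑ a, nu x a = 1)
    (hmu0 : ∀ x a, 0 ≤ mu x a) (hmu1 : ∀ x, ∑ a, mu x a = 1)
    (hDr0 : ∀ x a r, 0 ≤ Dr x a r) (hDr1 : ∀ x a, ∑ r, Dr x a r = 1)
    (hrval0 : ∀ r, 0 ≤ rval r) (hrval1 : ∀ r, rval r ≤ 1)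
    (hrhat0 : ∀ x a, 0 ≤ rhat x a) (hrhat1 : ∀ x a, rhat x a ≤ 1)
    (hmuhat : ∀ x a, 0 < muhat x a)
    (hpos : ∀ x a, 0 < nu x a → 0 < mu x a)
    (rstar : X → A → ℝ) (hrstar : ∀ x a, rstar x a = ∑ r, Dr x a r * rval r)
    (Δ : X → A → ℝ) (hΔ : ∀ x a, Δ x a = rhat x a - rstar x a)
    (ρ : X → A → ℝ) (hρ : ∀ x a, ρ x a = mu x a / muhat x a)
    (Vhat : X → A → R → ℝ)
    (hVhat : ∀ x a r, Vhat x a r =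
      (∑ a', nu x a' * rhat x a') + (nu x a / muhat x a) * (rval r - rhat x a)) :
    ∑ x, ∑ a, ∑ r, D x * (mu x a * (Dr x a r * Vhat x a r))
      = ∑ x, ∑ a, D x * (nu x a * (rstar x a + (1 - ρ x a) * Δ x a)) :=
  stmt1_general D nu mu Dr rval rhat muhat hmu1 hDr1 rstar hrstar Δ hΔ ρ hρ Vhat hVhat
end

section
/- Under the contextual bandit setup with additive reward-model error Δ(x,a) = r̂(x,a) − r*(x,a) and propensity ratio ρ_k(x,a) = μ_k(a|x)/μ̂_k(a|x), the conditional variance of the doubly robust term V̂_k satisfies Var_k[V̂_k] = Var_{x∼D}[ E_{a∼ν(·|x)}[ r*(x,a) + (1−ρ_k(x,a))Δ(x,a) ] ] − E_{x∼D}[ ( E_{a∼ν(·|x)}[ρ_k(x,a)Δ(x,a)] )² ] + E_{(x,a)∼ν}[ (ν(a|x)/μ̂_k(a|x))·ρ_k(x,a)·Var_{r∼D(·|x,a)}[r] ] + E_{(x,a)∼ν}[ (ν(a|x)/μ̂_k(a|x))·ρ_k(x,a)·Δ(x,a)² ]. -/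
/-!
Given the context `x` and action `a`, the estimator is affine in the reward,
`V̂ = B + s (r - r̂)` with `B = E_ν[r̂]` and `s = ν/μ̂`, so its conditional mean is `B - s Δ` and its
conditional second moment is `(B - s Δ)² + s² Var[r]`. Averaging over `a ∼ μ` turns every factor
`μ · s` into `ν · ρ`: the mean given `x` becomes `E_ν[r* + (1 - ρ)Δ]` and the second moment given `x`
picks up the two `ν/μ̂ · ρ` terms. The law of total variance over `x ∼ D` assembles the result.
-/

open Finset

section WeightedMoments

variable {ι : Type*} [Fintype ι] {w : ι → ℝ}

theorem sum_mul_add_mul_of_sum_eq_one (hw : ∑ i, w i = 1) (c s : ℝ) (v : ι → ℝ) :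
    ∑ i, w i * (c + s * v i) = c + s * ∑ i, w i * v i := by
  simp only [mul_add, sum_add_distrib, ← sum_mul, hw, mul_left_comm _ s, ← mul_sum]
  ring

theorem sum_mul_add_mul_sq_of_sum_eq_one (hw : ∑ i, w i = 1) (c s : ℝ) (v : ι → ℝ) :
    ∑ i, w i * (c + s * v i) ^ 2
      = (c + s * ∑ i, w i * v i) ^ 2 + s ^ 2 * (∑ i, w i * v i ^ 2 - (∑ i, w i * v i) ^ 2) := by
  have expand : ∀ i, w i * (c + s * v i) ^ 2
      = c ^ 2 * w i + 2 * c * s * (w i * v i) + s ^ 2 * (w i * v i ^ 2) := fun i => by ring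
  simp only [expand, sum_add_distrib, ← mul_sum, hw]
  ring

theorem sum_mul_sub_sq_sum_mul_of_split (w m t c e : ι → ℝ) :
    ∑ i, w i * (m i ^ 2 - t i ^ 2 + c i + e i) - (∑ i, w i * m i) ^ 2
      = (∑ i, w i * m i ^ 2 - (∑ i, w i * m i) ^ 2) - ∑ i, w i * t i ^ 2
        + ∑ i, w i * c i + ∑ i, w i * e i := by
  simp only [mul_add, mul_sub, sum_add_distrib, sum_sub_distrib]
  ring

end WeightedMoments

namespace DoublyRobust

variable {A R : Type*} [Fintype A] [Fintype R]

theorem mean_given_action {w : R → ℝ} (hw : ∑ r, w r = 1) (v : R → ℝ) (B s rhat : ℝ) :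
    ∑ r, w r * (B + s * (v r - rhat)) = B - s * (rhat - ∑ r, w r * v r) := by
  have h := sum_mul_add_mul_of_sum_eq_one hw (B - s * rhat) s v
  simp only [add_comm_sub, ← mul_sub] at h
  rw [h]
  ring

theorem second_moment_given_action {w : R → ℝ} (hw : ∑ r, w r = 1) (v : R → ℝ)
    (B s rhat : ℝ) :
    ∑ r, w r * (B + s * (v r - rhat)) ^ 2
      = (B - s * (rhat - ∑ r, w r * v r)) ^ 2
        + s ^ 2 * (∑ r, w r * v r ^ 2 - (∑ r, w r * v r) ^ 2) := by
  have h := sum_mul_add_mul_sq_of_sum_eq_one hw (B - s * rhat) s v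
  simp only [add_comm_sub, ← mul_sub] at h
  rw [h]
  ring

theorem mean_given_context {mu : A → ℝ} (hmu : ∑ a, mu a = 1) (nu muhat Δ : A → ℝ) (B : ℝ) :
    ∑ a, mu a * (B - nu a / muhat a * Δ a)
      = B - ∑ a, nu a * (mu a / muhat a * Δ a) := by
  have expand : ∀ a, mu a * (B - nu a / muhat a * Δ a)
      = B * mu a - nu a * (mu a / muhat a * Δ a) := fun a => by ring
  simp only [expand, sum_sub_distrib, ← mul_sum, hmu, mul_one]

theorem second_moment_given_context {mu : A → ℝ} (hmu : ∑ a, mu a = 1)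
    (nu muhat Δ varr : A → ℝ) (B : ℝ) :
    ∑ a, mu a * ((B - nu a / muhat a * Δ a) ^ 2 + (nu a / muhat a) ^ 2 * varr a)
      = (B - ∑ a, nu a * (mu a / muhat a * Δ a)) ^ 2 - (∑ a, nu a * (mu a / muhat a * Δ a)) ^ 2
        + ∑ a, nu a * (nu a / muhat a * (mu a / muhat a * varr a))
        + ∑ a, nu a * (nu a / muhat a * (mu a / muhat a * Δ a ^ 2)) := by
  have expand : ∀ a, mu a * ((B - nu a / muhat a * Δ a) ^ 2 + (nu a / muhat a) ^ 2 * varr a)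
      = B ^ 2 * mu a - 2 * B * (nu a * (mu a / muhat a * Δ a))
        + nu a * (nu a / muhat a * (mu a / muhat a * varr a))
        + nu a * (nu a / muhat a * (mu a / muhat a * Δ a ^ 2)) := fun a => by ring
  simp only [expand, sum_add_distrib, sum_sub_distrib, ← mul_sum, hmu]
  ring

end DoublyRobust

theorem stmt2_general {X A R : Type*} [Fintype X] [Fintype A] [Fintype R]
    (D : X → ℝ) (nu : X → A → ℝ) (mu : X → A → ℝ)
    (Dr : X → A → R → ℝ) (rval : R → ℝ)
    (rhat : X → A → ℝ) (muhat : X → A → ℝ)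
    (hmu1 : ∀ x, ∑ a, mu x a = 1)
    (hDr1 : ∀ x a, ∑ r, Dr x a r = 1)
    (rstar : X → A → ℝ) (hrstar : ∀ x a, rstar x a = ∑ r, Dr x a r * rval r)
    (Δ : X → A → ℝ) (hΔ : ∀ x a, Δ x a = rhat x a - rstar x a)
    (ρ : X → A → ℝ) (hρ : ∀ x a, ρ x a = mu x a / muhat x a)
    (varr : X → A → ℝ)
    (hvarr : ∀ x a, varr x a = (∑ r, Dr x a r * (rval r)^2) - (rstar x a)^2)
    (Vhat : X → A → R → ℝ)
    (hVhat : ∀ x a r, Vhat x a r =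
      (∑ a', nu x a' * rhat x a') + (nu x a / muhat x a) * (rval r - rhat x a)) :
    (∑ x, ∑ a, ∑ r, D x * (mu x a * (Dr x a r * (Vhat x a r)^2)))
      - (∑ x, ∑ a, ∑ r, D x * (mu x a * (Dr x a r * Vhat x a r)))^2
    = ((∑ x, D x * (∑ a, nu x a * (rstar x a + (1 - ρ x a) * Δ x a))^2)
        - (∑ x, D x * (∑ a, nu x a * (rstar x a + (1 - ρ x a) * Δ x a)))^2)
      - (∑ x, D x * (∑ a, nu x a * (ρ x a * Δ x a))^2)
      + (∑ x, ∑ a, D x * (nu x a * ((nu x a / muhat x a) * (ρ x a * varr x a))))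
      + (∑ x, ∑ a, D x * (nu x a * ((nu x a / muhat x a) * (ρ x a * (Δ x a)^2)))) := by
  have mean_eq_sub : ∀ x, ∑ a, nu x a * (rstar x a + (1 - ρ x a) * Δ x a)
      = ∑ a, nu x a * rhat x a - ∑ a, nu x a * (ρ x a * Δ x a) := fun x => by
    rw [← sum_sub_distrib]
    exact sum_congr rfl fun a _ => by rw [hΔ]; ring
  have mean_given_x : ∀ x, ∑ a, mu x a * ∑ r, Dr x a r * Vhat x a r
      = ∑ a, nu x a * (rstar x a + (1 - ρ x a) * Δ x a) := fun x => by
    simp only [hVhat, DoublyRobust.mean_given_action (hDr1 x _), ← hrstar, ← hΔ,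
      DoublyRobust.mean_given_context (hmu1 x), ← hρ x, mean_eq_sub]
  have second_moment_given_x : ∀ x, ∑ a, mu x a * ∑ r, Dr x a r * Vhat x a r ^ 2
      = (∑ a, nu x a * (rstar x a + (1 - ρ x a) * Δ x a)) ^ 2
        - (∑ a, nu x a * (ρ x a * Δ x a)) ^ 2
        + ∑ a, nu x a * (nu x a / muhat x a * (ρ x a * varr x a))
        + ∑ a, nu x a * (nu x a / muhat x a * (ρ x a * Δ x a ^ 2)) := fun x => by
    simp only [hVhat, DoublyRobust.second_moment_given_action (hDr1 x _), ← hrstar, ← hΔ, ← hvarr,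
      DoublyRobust.second_moment_given_context (hmu1 x), ← hρ x, mean_eq_sub]
  simp only [← mul_sum, mean_given_x, second_moment_given_x]
  exact sum_mul_sub_sq_sum_mul_of_split D _ _ _ _

/-- Exact decomposition of the conditional variance of the doubly robust term `V̂_k`. -/
theorem stmt2 {X A R : Type*} [Fintype X] [Fintype A] [Fintype R]
    (D : X → ℝ) (nu : X → A → ℝ) (mu : X → A → ℝ)
    (Dr : X → A → R → ℝ) (rval : R → ℝ)
    (rhat : X → A → ℝ) (muhat : X → A → ℝ)
    (hD0 : ∀ x, 0 ≤ D x) (hD1 : ∑ x, D x = 1)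
    (hnu0 : ∀ x a, 0 ≤ nu x a) (hnu1 : ∀ x, ∑ a, nu x a = 1)
    (hmu0 : ∀ x a, 0 ≤ mu x a) (hmu1 : ∀ x, ∑ a, mu x a = 1)
    (hDr0 : ∀ x a r, 0 ≤ Dr x a r) (hDr1 : ∀ x a, ∑ r, Dr x a r = 1)
    (hrval0 : ∀ r, 0 ≤ rval r) (hrval1 : ∀ r, rval r ≤ 1)
    (hrhat0 : ∀ x a, 0 ≤ rhat x a) (hrhat1 : ∀ x a, rhat x a ≤ 1)
    (hmuhat : ∀ x a, 0 < muhat x a)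
    (hpos : ∀ x a, 0 < nu x a → 0 < mu x a)
    (rstar : X → A → ℝ) (hrstar : ∀ x a, rstar x a = ∑ r, Dr x a r * rval r)
    (Δ : X → A → ℝ) (hΔ : ∀ x a, Δ x a = rhat x a - rstar x a)
    (ρ : X → A → ℝ) (hρ : ∀ x a, ρ x a = mu x a / muhat x a)
    (varr : X → A → ℝ)
    (hvarr : ∀ x a, varr x a = (∑ r, Dr x a r * (rval r)^2) - (rstar x a)^2)
    (Vhat : X → A → R → ℝ)
    (hVhat : ∀ x a r, Vhat x a r =
      (∑ a', nu x a' * rhat x a') + (nu x a / muhat x a) * (rval r - rhat x a)) :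
    (∑ x, ∑ a, ∑ r, D x * (mu x a * (Dr x a r * (Vhat x a r)^2)))
      - (∑ x, ∑ a, ∑ r, D x * (mu x a * (Dr x a r * Vhat x a r)))^2
    = ((∑ x, D x * (∑ a, nu x a * (rstar x a + (1 - ρ x a) * Δ x a))^2)
        - (∑ x, D x * (∑ a, nu x a * (rstar x a + (1 - ρ x a) * Δ x a)))^2)
      - (∑ x, D x * (∑ a, nu x a * (ρ x a * Δ x a))^2)
      + (∑ x, ∑ a, D x * (nu x a * ((nu x a / muhat x a) * (ρ x a * varr x a))))
      + (∑ x, ∑ a, D x * (nu x a * ((nu x a / muhat x a) * (ρ x a * (Δ x a)^2)))) :=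
  stmt2_general D nu mu Dr rval rhat muhat hmu1 hDr1 rstar hrstar Δ hΔ ρ hρ varr hvarr Vhat hVhat
end

section
/- Under the contextual bandit setup with ratio bound ν(a|x)/μ̂_k(a|x) ≤ M, the conditional variance of the doubly robust term V̂_k is upper bounded by Var_{x∼D}[ r*(x,ν) ] + 2·E_{(x,a)∼ν}[ |(1−ρ_k(x,a))·Δ(x,a)| ] + M·E_{(x,a)∼ν}[ ρ_k(x,a)·E_{r∼D(·|x,a)}[(r − r̂(x,a))²] ], where r*(x,ν) = Σ_a ν(a|x) r*(x,a). -/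
/-!
Conditionally on `x`, write `S = Σ_a ν r̂`, `Y = r*(x,ν)` and `b = Σ_a ν ρ Δ`. Averaging over `a`
and `r`, the doubly robust term has mean `S - b` and second moment
`S² - 2 S b + Σ_a (ν/μ̂) ν ρ E[(r - r̂)²]`, because `μ · (ν/μ̂) = ν ρ`. Averaging over `x`, the
variance is `Var Y + 2 E[(S - Y - b)(S - E Y)] - E[(S - Y)²] - (E[S - Y - b])²` plus the averaged
last term. Since `S` and `E Y` lie in `[0,1]` and `S - Y - b = Σ_a ν (1 - ρ) Δ`, the cross term is
at most `2 E[Σ_a ν |(1 - ρ) Δ|]`, and `ν/μ̂ ≤ M` bounds the last one.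
-/

open Finset

section WeightedSums

variable {ι : Type*} [Fintype ι] {p : ι → ℝ}

theorem sum_mul_sub_const (hp : ∑ i, p i = 1) (v : ι → ℝ) (b : ℝ) :
    ∑ i, p i * (v i - b) = ∑ i, p i * v i - b := by
  simp only [mul_sub, sum_sub_distrib, ← sum_mul, hp, one_mul]

theorem sum_mul_const_add_mul (hp : ∑ i, p i = 1) (c w : ℝ) (u : ι → ℝ) :
    ∑ i, p i * (c + w * u i) = c + w * ∑ i, p i * u i := by
  rw [sum_mul_const_add hp, mul_sum]
  simp only [mul_left_comm]

theorem sum_mul_const_add_mul_sq (hp : ∑ i, p i = 1) (c w : ℝ) (u : ι → ℝ) :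
    ∑ i, p i * (c + w * u i) ^ 2
      = c ^ 2 + (2 * c * (w * ∑ i, p i * u i) + w ^ 2 * ∑ i, p i * u i ^ 2) := by
  have h : ∀ i, (c + w * u i) ^ 2 = c ^ 2 + (2 * c * w * u i + w ^ 2 * u i ^ 2) := fun i => by ring
  simp only [h]
  rw [sum_mul_const_add hp]
  simp only [mul_add, sum_add_distrib, mul_sum]
  congr 2 <;> exact sum_congr rfl fun i _ => by ring

theorem sum_mul_sum_mul_le_mul {κ : Type*} [Fintype κ] {D : ι → ℝ} {w t : ι → κ → ℝ} {M : ℝ}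
    (hD : ∀ i, 0 ≤ D i) (ht : ∀ i k, 0 ≤ t i k) (hw : ∀ i k, w i k ≤ M) :
    ∑ i, D i * ∑ k, w i k * t i k ≤ M * ∑ i, D i * ∑ k, t i k := by
  calc ∑ i, D i * ∑ k, w i k * t i k ≤ ∑ i, D i * ∑ k, M * t i k := by
        gcongr with i _ k _
        · exact hD i
        · exact ht i k
        · exact hw i k
    _ = M * ∑ i, D i * ∑ k, t i k := by
        simp only [← mul_sum, mul_left_comm]

theorem sum_mul_mem_unitInterval (hp0 : ∀ i, 0 ≤ p i) (hp1 : ∑ i, p i = 1) {f : ι → ℝ}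
    (hf : ∀ i, f i ∈ Set.Icc 0 1) : ∑ i, p i * f i ∈ Set.Icc 0 1 :=
  (convex_Icc (0 : ℝ) 1).sum_mem (fun i _ => hp0 i) hp1 fun i _ => hf i

end WeightedSums

theorem mixture_variance_le {X : Type*} [Fintype X] {D S Y b B Q : X → ℝ}
    (hD0 : ∀ x, 0 ≤ D x) (hD1 : ∑ x, D x = 1)
    (hS : ∀ x, S x ∈ Set.Icc 0 1) (hY : ∀ x, Y x ∈ Set.Icc 0 1) (hB : ∀ x, |S x - Y x - b x| ≤ B x) :
    ∑ x, D x * (S x ^ 2 - 2 * S x * b x + Q x) - (∑ x, D x * (S x - b x)) ^ 2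
      ≤ (∑ x, D x * Y x ^ 2 - (∑ x, D x * Y x) ^ 2) + 2 * ∑ x, D x * B x + ∑ x, D x * Q x := by
  set m := ∑ x, D x * Y x
  have hm : m ∈ Set.Icc 0 1 := sum_mul_mem_unitInterval hD0 hD1 hY
  have hpt : ∀ x, D x * (S x ^ 2 - 2 * S x * b x + Q x)
      ≤ D x * Y x ^ 2 + 2 * (D x * B x) + D x * Q x + 2 * m * (D x * (S x - Y x - b x)) := by
    intro x
    have hgap : (S x - Y x - b x) * (S x - m) ≤ B x :=
      calc (S x - Y x - b x) * (S x - m) ≤ |S x - Y x - b x| * |S x - m| := by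
            rw [← abs_mul]; exact le_abs_self _
        _ ≤ B x * 1 := by
            gcongr
            · exact (abs_nonneg _).trans (hB x)
            · exact hB x
            · exact abs_sub_le_of_nonneg_of_le (hS x).1 (hS x).2 hm.1 hm.2
        _ = B x := mul_one _
    nlinarith [mul_le_mul_of_nonneg_left hgap (hD0 x), mul_nonneg (hD0 x) (sq_nonneg (S x - Y x))]
  have hsum := sum_le_sum fun x (_ : x ∈ univ) => hpt x
  simp only [sum_add_distrib, ← mul_sum] at hsum
  have hmean : ∑ x, D x * (S x - b x) = m + ∑ x, D x * (S x - Y x - b x) := by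
    rw [← sum_add_distrib]; exact sum_congr rfl fun x _ => by ring
  rw [hmean]
  nlinarith [sq_nonneg (∑ x, D x * (S x - Y x - b x))]

section DoublyRobust

variable {A R : Type*} [Fintype A] [Fintype R] {nu mu muhat rhat rstar Δ ρ : A → ℝ}
  {Dr : A → R → ℝ} {rval : R → ℝ}

theorem doublyRobust_mean (hmu : ∑ a, mu a = 1) (hDr : ∀ a, ∑ r, Dr a r = 1)
    (hrstar : ∀ a, rstar a = ∑ r, Dr a r * rval r) (hΔ : ∀ a, Δ a = rhat a - rstar a)
    (hρ : ∀ a, ρ a = mu a / muhat a) :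
    ∑ a, mu a * ∑ r, Dr a r * (∑ a', nu a' * rhat a' + nu a / muhat a * (rval r - rhat a))
      = ∑ a, nu a * rhat a - ∑ a, nu a * (ρ a * Δ a) := by
  simp only [sum_mul_const_add_mul (hDr _), sum_mul_sub_const (hDr _), ← hrstar,
    sum_mul_const_add hmu]
  rw [sub_eq_add_neg, ← sum_neg_distrib]
  congr 1
  exact sum_congr rfl fun a _ => by rw [hΔ, hρ]; ring

theorem doublyRobust_sq (hmu : ∑ a, mu a = 1) (hDr : ∀ a, ∑ r, Dr a r = 1)
    (hrstar : ∀ a, rstar a = ∑ r, Dr a r * rval r) (hΔ : ∀ a, Δ a = rhat a - rstar a)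
    (hρ : ∀ a, ρ a = mu a / muhat a) :
    ∑ a, mu a * ∑ r, Dr a r * (∑ a', nu a' * rhat a' + nu a / muhat a * (rval r - rhat a)) ^ 2
      = (∑ a, nu a * rhat a) ^ 2 - 2 * (∑ a, nu a * rhat a) * ∑ a, nu a * (ρ a * Δ a)
        + ∑ a, nu a / muhat a * (nu a * (ρ a * ∑ r, Dr a r * (rval r - rhat a) ^ 2)) := by
  simp only [sum_mul_const_add_mul_sq (hDr _), sum_mul_sub_const (hDr _), ← hrstar,
    sum_mul_const_add hmu]
  rw [sub_add_eq_add_sub, add_sub_assoc, mul_sum univ fun a => nu a * (ρ a * Δ a),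
    ← sum_sub_distrib]
  congr 1
  exact sum_congr rfl fun a _ => by rw [hΔ, hρ]; ring

theorem abs_doublyRobust_bias_le {Y : ℝ} (hnu : ∀ a, 0 ≤ nu a) (hΔ : ∀ a, Δ a = rhat a - rstar a)
    (hY : Y = ∑ a, nu a * rstar a) :
    |∑ a, nu a * rhat a - Y - ∑ a, nu a * (ρ a * Δ a)| ≤ ∑ a, nu a * |(1 - ρ a) * Δ a| := by
  have hbias : ∑ a, nu a * rhat a - Y - ∑ a, nu a * (ρ a * Δ a)
      = ∑ a, nu a * ((1 - ρ a) * Δ a) := by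
    rw [hY, ← sum_sub_distrib, ← sum_sub_distrib]
    exact sum_congr rfl fun a _ => by rw [hΔ]; ring
  rw [hbias]
  refine (abs_sum_le_sum_abs _ _).trans_eq (sum_congr rfl fun a _ => ?_)
  rw [abs_mul, abs_of_nonneg (hnu a)]

end DoublyRobust

theorem stmt3_general {X A R : Type*} [Fintype X] [Fintype A] [Fintype R]
    (D : X → ℝ) (nu : X → A → ℝ) (mu : X → A → ℝ)
    (Dr : X → A → R → ℝ) (rval : R → ℝ)
    (rhat : X → A → ℝ) (muhat : X → A → ℝ) (M : ℝ)
    (hD0 : ∀ x, 0 ≤ D x) (hD1 : ∑ x, D x = 1)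
    (hnu0 : ∀ x a, 0 ≤ nu x a) (hnu1 : ∀ x, ∑ a, nu x a = 1)
    (hmu0 : ∀ x a, 0 ≤ mu x a) (hmu1 : ∀ x, ∑ a, mu x a = 1)
    (hDr0 : ∀ x a r, 0 ≤ Dr x a r) (hDr1 : ∀ x a, ∑ r, Dr x a r = 1)
    (hrval0 : ∀ r, 0 ≤ rval r) (hrval1 : ∀ r, rval r ≤ 1)
    (hrhat0 : ∀ x a, 0 ≤ rhat x a) (hrhat1 : ∀ x a, rhat x a ≤ 1)
    (hmuhat : ∀ x a, 0 < muhat x a)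
    (hM : ∀ x a, nu x a / muhat x a ≤ M)
    (rstar : X → A → ℝ) (hrstar : ∀ x a, rstar x a = ∑ r, Dr x a r * rval r)
    (Δ : X → A → ℝ) (hΔ : ∀ x a, Δ x a = rhat x a - rstar x a)
    (ρ : X → A → ℝ) (hρ : ∀ x a, ρ x a = mu x a / muhat x a)
    (rnux : X → ℝ) (hrnux : ∀ x, rnux x = ∑ a, nu x a * rstar x a)
    (Vhat : X → A → R → ℝ)
    (hVhat : ∀ x a r, Vhat x a r =
      (∑ a', nu x a' * rhat x a') + (nu x a / muhat x a) * (rval r - rhat x a)) :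
    (∑ x, ∑ a, ∑ r, D x * (mu x a * (Dr x a r * (Vhat x a r)^2)))
      - (∑ x, ∑ a, ∑ r, D x * (mu x a * (Dr x a r * Vhat x a r)))^2
    ≤ ((∑ x, D x * (rnux x)^2) - (∑ x, D x * rnux x)^2)
      + 2 * (∑ x, ∑ a, D x * (nu x a * |(1 - ρ x a) * Δ x a|))
      + M * (∑ x, ∑ a, D x * (nu x a * (ρ x a *
          (∑ r, Dr x a r * (rval r - rhat x a)^2)))) := by
  have hrstar_mem : ∀ x a, rstar x a ∈ Set.Icc 0 1 := fun x a =>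
    hrstar x a ▸ sum_mul_mem_unitInterval (hDr0 x a) (hDr1 x a) fun r => ⟨hrval0 r, hrval1 r⟩
  have hmean := fun x => doublyRobust_mean (nu := nu x) (hmu1 x) (hDr1 x) (hrstar x) (hΔ x) (hρ x)
  have hsq := fun x => doublyRobust_sq (nu := nu x) (hmu1 x) (hDr1 x) (hrstar x) (hΔ x) (hρ x)
  simp only [← mul_sum, hVhat, hmean, hsq]
  refine (mixture_variance_le hD0 hD1
    (fun x => sum_mul_mem_unitInterval (hnu0 x) (hnu1 x) fun a => ⟨hrhat0 x a, hrhat1 x a⟩)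
    (fun x => hrnux x ▸ sum_mul_mem_unitInterval (hnu0 x) (hnu1 x) (hrstar_mem x))
    fun x => abs_doublyRobust_bias_le (hnu0 x) (hΔ x) (hrnux x)).trans ?_
  gcongr
  refine sum_mul_sum_mul_le_mul hD0 (fun x a => mul_nonneg (hnu0 x a) (mul_nonneg ?_ ?_)) hM
  · exact hρ x a ▸ div_nonneg (hmu0 x a) (hmuhat x a).le
  · exact sum_nonneg fun r _ => mul_nonneg (hDr0 x a r) (sq_nonneg _)

/-- Upper bound on the conditional variance of the doubly robust term `V̂_k`. -/
theorem stmt3 {X A R : Type*} [Fintype X] [Fintype A] [Fintype R]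
    (D : X → ℝ) (nu : X → A → ℝ) (mu : X → A → ℝ)
    (Dr : X → A → R → ℝ) (rval : R → ℝ)
    (rhat : X → A → ℝ) (muhat : X → A → ℝ) (M : ℝ)
    (hD0 : ∀ x, 0 ≤ D x) (hD1 : ∑ x, D x = 1)
    (hnu0 : ∀ x a, 0 ≤ nu x a) (hnu1 : ∀ x, ∑ a, nu x a = 1)
    (hmu0 : ∀ x a, 0 ≤ mu x a) (hmu1 : ∀ x, ∑ a, mu x a = 1)
    (hDr0 : ∀ x a r, 0 ≤ Dr x a r) (hDr1 : ∀ x a, ∑ r, Dr x a r = 1)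
    (hrval0 : ∀ r, 0 ≤ rval r) (hrval1 : ∀ r, rval r ≤ 1)
    (hrhat0 : ∀ x a, 0 ≤ rhat x a) (hrhat1 : ∀ x a, rhat x a ≤ 1)
    (hmuhat : ∀ x a, 0 < muhat x a)
    (hpos : ∀ x a, 0 < nu x a → 0 < mu x a)
    (hM : ∀ x a, nu x a / muhat x a ≤ M)
    (rstar : X → A → ℝ) (hrstar : ∀ x a, rstar x a = ∑ r, Dr x a r * rval r)
    (Δ : X → A → ℝ) (hΔ : ∀ x a, Δ x a = rhat x a - rstar x a)
    (ρ : X → A → ℝ) (hρ : ∀ x a, ρ x a = mu x a / muhat x a)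
    (rnux : X → ℝ) (hrnux : ∀ x, rnux x = ∑ a, nu x a * rstar x a)
    (Vhat : X → A → R → ℝ)
    (hVhat : ∀ x a r, Vhat x a r =
      (∑ a', nu x a' * rhat x a') + (nu x a / muhat x a) * (rval r - rhat x a)) :
    (∑ x, ∑ a, ∑ r, D x * (mu x a * (Dr x a r * (Vhat x a r)^2)))
      - (∑ x, ∑ a, ∑ r, D x * (mu x a * (Dr x a r * Vhat x a r)))^2
    ≤ ((∑ x, D x * (rnux x)^2) - (∑ x, D x * rnux x)^2)
      + 2 * (∑ x, ∑ a, D x * (nu x a * |(1 - ρ x a) * Δ x a|))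
      + M * (∑ x, ∑ a, D x * (nu x a * (ρ x a *
          (∑ r, Dr x a r * (rval r - rhat x a)^2)))) :=
  stmt3_general D nu mu Dr rval rhat muhat M hD0 hD1 hnu0 hnu1 hmu0 hmu1 hDr0 hDr1 hrval0 hrval1
    hrhat0 hrhat1 hmuhat hM rstar hrstar Δ hΔ ρ hρ rnux hrnux Vhat hVhat
end

section
/- The bias of the doubly robust estimator V̂_DR = (1/n) Σ_{k=1}^n V̂_k satisfies |E_μ[V̂_DR] − V| = (1/n)| E_μ[ Σ_{k=1}^n E_{(x,a)∼ν}[ (1 − ρ_k(x,a))·Δ(x,a) ] ] |, where V = E_ν[r]. Moreover, if the exploration policy and the propensity estimator are stationary (μ_k = μ_1, μ̂_k = μ̂_1 for all k), this simplifies to |E_μ[V̂_DR] − V| = | E_{(x,a)∼ν}[ (1 − ρ_1(x,a))·Δ(x,a) ] |. -/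
/-!
The joint law of the adaptively collected sample is a product of conditional kernels, one per
round, so the expectation of any function of the first `k + 1` samples may be computed by
integrating out the `k`-th sample against its kernel given the history. Given the history, the
`k`-th doubly robust term has mean `E_ν[r̂] + E_ν[ρ_k (r* - r̂)] = V + E_ν[(1 - ρ_k) Δ]`,
since reweighting a `μ_k`-sample by `ν / μ̂_k` turns `μ_k` into `ρ_k ν`.
Averaging over the rounds gives the bias, which is a constant when `μ_k, μ̂_k` do not depend
on `k` or the history.
-/

open Finset

section PathWeight

variable {S : Type*}

theorem Fin.take_snoc_of_le {n m : ℕ} (h : m ≤ n + 1) (hm : m ≤ n) (y : Fin n → S) (s : S) :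
    Fin.take m h (Fin.snoc y s : Fin (n + 1) → S) = Fin.take m hm y := by
  rw [← Fin.take_init m hm, Fin.init_snoc]

def pathWeight (w : (k : ℕ) → (Fin k → S) → S → ℝ) (n : ℕ) (z : Fin n → S) : ℝ :=
  ∏ k : Fin n, w k (Fin.take k k.isLt.le z) (z k)

variable {w : (k : ℕ) → (Fin k → S) → S → ℝ}

theorem pathWeight_snoc {n : ℕ} (y : Fin n → S) (s : S) :
    pathWeight w (n + 1) (Fin.snoc y s) = pathWeight w n y * w n y s := by
  simp only [pathWeight, Fin.prod_univ_castSucc, Fin.val_castSucc, Fin.val_last,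
    Fin.snoc_castSucc, Fin.snoc_last, Fin.take_eq_init, Fin.init_snoc]
  congr 1
  exact prod_congr rfl fun k _ => by rw [Fin.take_snoc_of_le _ k.isLt.le]

variable [Fintype S]

theorem Fintype.sum_fin_succ_pi_eq_sum_snoc {n : ℕ} (f : (Fin (n + 1) → S) → ℝ) :
    ∑ z, f z = ∑ y : Fin n → S, ∑ s, f (Fin.snoc y s) := by
  rw [← (Fin.snocEquiv fun _ => S).sum_comp, Fintype.sum_prod_type, Finset.sum_comm]
  rfl

theorem sum_pathWeight_mul_take {n m : ℕ} (hw : ∀ k < n, ∀ h, ∑ s, w k h s = 1) (hm : m ≤ n)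
    (f : (Fin m → S) → ℝ) :
    ∑ z, pathWeight w n z * f (Fin.take m hm z) = ∑ y, pathWeight w m y * f y := by
  induction n with
  | zero => obtain rfl := Nat.le_zero.1 hm; rfl
  | succ n ih =>
    rcases hm.eq_or_lt with rfl | hlt
    · simp only [Fin.take_eq_self]
    have hm' : m ≤ n := Nat.le_of_lt_succ hlt
    rw [Fintype.sum_fin_succ_pi_eq_sum_snoc]
    simp only [pathWeight_snoc, Fin.take_snoc_of_le hm hm']
    calc ∑ y : Fin n → S, ∑ s, pathWeight w n y * w n y s * f (Fin.take m hm' y)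
        = ∑ y : Fin n → S, pathWeight w n y * (∑ s, w n y s) * f (Fin.take m hm' y) := by
          simp only [mul_sum, sum_mul]
      _ = ∑ y, pathWeight w m y * f y := by
          simp only [hw n n.lt_succ_self, mul_one]
          exact ih (fun k hk => hw k (hk.trans n.lt_succ_self)) hm'

theorem sum_pathWeight {n : ℕ} (hw : ∀ k < n, ∀ h, ∑ s, w k h s = 1) :
    ∑ z, pathWeight w n z = 1 := by
  simpa [pathWeight] using sum_pathWeight_mul_take hw n.zero_le fun _ => 1

theorem sum_pathWeight_mul_step {n : ℕ} (hw : ∀ k < n, ∀ h, ∑ s, w k h s = 1) (k : Fin n)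
    (φ : (Fin k → S) → S → ℝ) :
    ∑ z, pathWeight w n z * φ (Fin.take k k.isLt.le z) (z k)
      = ∑ z, pathWeight w n z *
          ∑ s, w k (Fin.take k k.isLt.le z) s * φ (Fin.take k k.isLt.le z) s := by
  have hsucc := sum_pathWeight_mul_take hw k.isLt fun y => φ (Fin.init y) (y (Fin.last k))
  simp only [Fin.take_succ_eq_snoc _ k.isLt, Fin.init_snoc, Fin.snoc_last,
    Fintype.sum_fin_succ_pi_eq_sum_snoc, pathWeight_snoc] at hsucc
  rw [hsucc, sum_pathWeight_mul_take hw k.isLt.le fun y => ∑ s, w k y s * φ y s]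
  simp only [mul_sum, mul_assoc]


theorem sum_pathWeight_mul_sum {n : ℕ} (hw : ∀ k < n, ∀ h, ∑ s, w k h s = 1)
    (f : (k : Fin n) → (Fin k → S) → S → ℝ) :
    ∑ z, pathWeight w n z * ∑ k : Fin n, f k (Fin.take k k.isLt.le z) (z k)
      = ∑ z, pathWeight w n z *
          ∑ k : Fin n, ∑ s, w k (Fin.take k k.isLt.le z) s * f k (Fin.take k k.isLt.le z) s := by
  simp only [mul_sum (s := univ (α := Fin n))]
  rw [sum_comm, sum_comm (γ := Fin n → S)]
  exact sum_congr rfl fun k _ => sum_pathWeight_mul_step hw k (f k)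

theorem sum_pathWeight_mul_average_sub {n : ℕ} (hn : 0 < n)
    (hw : ∀ k < n, ∀ h, ∑ s, w k h s = 1) (f : (k : Fin n) → (Fin k → S) → S → ℝ) (c : ℝ)
    (b : (k : Fin n) → (Fin k → S) → ℝ) (hf : ∀ (k : Fin n) h, ∑ s, w k h s * f k h s = c + b k h) :
    ∑ z, pathWeight w n z * ((n : ℝ)⁻¹ * ∑ k : Fin n, f k (Fin.take k k.isLt.le z) (z k)) - c
      = (n : ℝ)⁻¹ * ∑ z, pathWeight w n z * ∑ k : Fin n, b k (Fin.take k k.isLt.le z) := by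
  calc _ = (n : ℝ)⁻¹ * ∑ z, pathWeight w n z * ∑ k : Fin n, f k (Fin.take k k.isLt.le z) (z k)
          - c := by
        simp only [mul_sum, mul_left_comm]
    _ = (n : ℝ)⁻¹ * (n * c + ∑ z, pathWeight w n z * ∑ k : Fin n, b k (Fin.take k k.isLt.le z))
          - c := by
        simp only [sum_pathWeight_mul_sum hw f, hf, sum_add_distrib, mul_add, sum_const,
          card_univ, Fintype.card_fin, nsmul_eq_mul, mul_left_comm _ (n : ℝ), ← mul_sum,
          ← sum_mul, sum_pathWeight hw, one_mul]
    _ = _ := by field_simp; ring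

end PathWeight

section DoublyRobust

variable {X A R : Type*} [Fintype X] [Fintype A] [Fintype R]

noncomputable def doublyRobustBias (D : X → ℝ) (nu rhat rstar pi pihat : X → A → ℝ) : ℝ :=
  ∑ x, ∑ a, D x * (nu x a * ((1 - pi x a / pihat x a) * (rhat x a - rstar x a)))

theorem sum_mul_doublyRobust (D : X → ℝ) (nu pi pihat rhat rstar : X → A → ℝ)
    (Dr : X → A → R → ℝ) (rval : R → ℝ) (hpi : ∀ x, ∑ a, pi x a = 1)
    (hDr : ∀ x a, ∑ r, Dr x a r = 1) (hrstar : ∀ x a, rstar x a = ∑ r, Dr x a r * rval r) :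
    ∑ x, ∑ a, ∑ r, D x * (pi x a * Dr x a r) *
        ((∑ a', nu x a' * rhat x a') + nu x a / pihat x a * (rval r - rhat x a))
      = ∑ x, ∑ a, ∑ r, D x * (nu x a * (Dr x a r * rval r)) +
        doublyRobustBias D nu rhat rstar pi pihat := by
  have hreward : ∀ x a (c q : ℝ), ∑ r, D x * (pi x a * Dr x a r) * (c + q * (rval r - rhat x a))
      = D x * pi x a * (c + q * (rstar x a - rhat x a)) := by
    intro x a c q
    calc _ = D x * pi x a * ((c - q * rhat x a) * ∑ r, Dr x a r + q * ∑ r, Dr x a r * rval r) := by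
          rw [mul_sum, mul_sum, ← sum_add_distrib, mul_sum]
          exact sum_congr rfl fun r _ => by ring
      _ = _ := by rw [hDr, ← hrstar]; ring
  have hvalue : ∀ x a, ∑ r, D x * (nu x a * (Dr x a r * rval r)) = D x * (nu x a * rstar x a) := by
    intro x a
    rw [hrstar, mul_sum, mul_sum]
  simp only [hreward, hvalue, doublyRobustBias, ← sum_add_distrib]
  refine sum_congr rfl fun x _ => ?_
  calc _ = D x * (∑ a', nu x a' * rhat x a') * ∑ a, pi x a
        + ∑ a, D x * (nu x a * (pi x a / pihat x a * (rstar x a - rhat x a))) := by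
        rw [mul_sum, ← sum_add_distrib]
        exact sum_congr rfl fun a _ => by ring
    _ = ∑ a, D x * (nu x a * rhat x a)
        + ∑ a, D x * (nu x a * (pi x a / pihat x a * (rstar x a - rhat x a))) := by
        rw [hpi, mul_one, mul_sum]
    _ = _ := by
        rw [← sum_add_distrib]
        exact sum_congr rfl fun a _ => by ring

end DoublyRobust
theorem stmt4_general {X A R : Type*} [Fintype X] [Fintype A] [Fintype R]
    (n : ℕ) (hn : 0 < n)
    (D : X → ℝ) (nu : X → A → ℝ) (Dr : X → A → R → ℝ) (rval : R → ℝ)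
    (rhat : X → A → ℝ)
    (mu : (k : Fin n) → (Fin k → X × A × R) → X → A → ℝ)
    (muhat : (k : Fin n) → (Fin k → X × A × R) → X → A → ℝ)
    (hD1 : ∑ x, D x = 1)
    (hmu1 : ∀ k h x, ∑ a, mu k h x a = 1)
    (hDr1 : ∀ x a, ∑ r, Dr x a r = 1)
    (rstar : X → A → ℝ) (hrstar : ∀ x a, rstar x a = ∑ r, Dr x a r * rval r)
    (P : (Fin n → X × A × R) → ℝ)
    (hP : ∀ z, P z = ∏ k, D (z k).1 *
      (mu k (fun i => z ⟨i.1, i.isLt.trans k.isLt⟩) (z k).1 (z k).2.1 *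
        Dr (z k).1 (z k).2.1 (z k).2.2))
    (Vhatk : (k : Fin n) → (Fin k → X × A × R) → X × A × R → ℝ)
    (hVhatk : ∀ k h s, Vhatk k h s =
      (∑ a', nu s.1 a' * rhat s.1 a') +
        (nu s.1 s.2.1 / muhat k h s.1 s.2.1) * (rval s.2.2 - rhat s.1 s.2.1))
    (V : ℝ) (hV : V = ∑ x, ∑ a, ∑ r, D x * (nu x a * (Dr x a r * rval r))) :
    (|(∑ z : Fin n → X × A × R, P z *
          ((n : ℝ)⁻¹ * ∑ k, Vhatk k (fun i => z ⟨i.1, i.isLt.trans k.isLt⟩) (z k))) - V|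
      = (n : ℝ)⁻¹ * |∑ z : Fin n → X × A × R, P z *
          ∑ k : Fin n, ∑ x, ∑ a, D x * (nu x a *
            ((1 - mu k (fun i => z ⟨i.1, i.isLt.trans k.isLt⟩) x a /
                  muhat k (fun i => z ⟨i.1, i.isLt.trans k.isLt⟩) x a) *
              (rhat x a - rstar x a)))|)
    ∧ (∀ (mu1 muhat1 : X → A → ℝ),
        (∀ k h, mu k h = mu1) → (∀ k h, muhat k h = muhat1) →
        |(∑ z : Fin n → X × A × R, P z *
            ((n : ℝ)⁻¹ * ∑ k, Vhatk k (fun i => z ⟨i.1, i.isLt.trans k.isLt⟩) (z k))) - V|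
          = |∑ x, ∑ a, D x * (nu x a *
              ((1 - mu1 x a / muhat1 x a) * (rhat x a - rstar x a)))|) := by
  let w : (k : ℕ) → (Fin k → X × A × R) → X × A × R → ℝ := fun k h s =>
    if hk : k < n then D s.1 * (mu ⟨k, hk⟩ h s.1 s.2.1 * Dr s.1 s.2.1 s.2.2) else 0
  obtain rfl : P = pathWeight w n := funext fun z => by
    simp only [hP, pathWeight, w, dif_pos (Fin.isLt _)]
    rfl
  have hw : ∀ k < n, ∀ h, ∑ s, w k h s = 1 := by
    intro k hk h
    simp only [w, dif_pos hk, Fintype.sum_prod_type, ← mul_sum, hDr1, mul_one, hmu1, hD1]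
  have hbias := sum_pathWeight_mul_average_sub hn hw Vhatk V
    (fun k h => doublyRobustBias D nu rhat rstar (mu k h) (muhat k h)) fun k h => by
      simp only [w, dif_pos k.isLt, hVhatk, Fintype.sum_prod_type, hV]
      exact sum_mul_doublyRobust D nu _ _ rhat rstar Dr rval (hmu1 k h) hDr1 hrstar
  refine ⟨(congrArg abs hbias).trans ?_, fun mu1 muhat1 hmu hmuhat => ?_⟩
  · rw [abs_mul, abs_inv, Nat.abs_cast]
    rfl
  · simp only [hmu, hmuhat, sum_const, card_univ, Fintype.card_fin, nsmul_eq_mul, ← sum_mul,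
      sum_pathWeight hw, one_mul,
      inv_mul_cancel_left₀ (Nat.cast_pos.2 hn : (0 : ℝ) < n).ne'] at hbias
    exact congrArg abs hbias

/-- Bias of the doubly robust estimator `V̂_DR = (1/n) Σ_k V̂_k` under a possibly
adaptive exploration policy, together with the stationary simplification. -/
theorem stmt4 {X A R : Type*} [Fintype X] [Fintype A] [Fintype R]
    (n : ℕ) (hn : 0 < n)
    (D : X → ℝ) (nu : X → A → ℝ) (Dr : X → A → R → ℝ) (rval : R → ℝ)
    (rhat : X → A → ℝ)
    (mu : (k : Fin n) → (Fin k → X × A × R) → X → A → ℝ)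
    (muhat : (k : Fin n) → (Fin k → X × A × R) → X → A → ℝ)
    (hD0 : ∀ x, 0 ≤ D x) (hD1 : ∑ x, D x = 1)
    (hnu0 : ∀ x a, 0 ≤ nu x a) (hnu1 : ∀ x, ∑ a, nu x a = 1)
    (hmu0 : ∀ k h x a, 0 ≤ mu k h x a) (hmu1 : ∀ k h x, ∑ a, mu k h x a = 1)
    (hDr0 : ∀ x a r, 0 ≤ Dr x a r) (hDr1 : ∀ x a, ∑ r, Dr x a r = 1)
    (hrval0 : ∀ r, 0 ≤ rval r) (hrval1 : ∀ r, rval r ≤ 1)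
    (hrhat0 : ∀ x a, 0 ≤ rhat x a) (hrhat1 : ∀ x a, rhat x a ≤ 1)
    (hmuhat : ∀ k h x a, 0 < muhat k h x a)
    (hpos : ∀ k h x a, 0 < nu x a → 0 < mu k h x a)
    (rstar : X → A → ℝ) (hrstar : ∀ x a, rstar x a = ∑ r, Dr x a r * rval r)
    (P : (Fin n → X × A × R) → ℝ)
    (hP : ∀ z, P z = ∏ k, D (z k).1 *
      (mu k (fun i => z ⟨i.1, i.isLt.trans k.isLt⟩) (z k).1 (z k).2.1 *
        Dr (z k).1 (z k).2.1 (z k).2.2))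
    (Vhatk : (k : Fin n) → (Fin k → X × A × R) → X × A × R → ℝ)
    (hVhatk : ∀ k h s, Vhatk k h s =
      (∑ a', nu s.1 a' * rhat s.1 a') +
        (nu s.1 s.2.1 / muhat k h s.1 s.2.1) * (rval s.2.2 - rhat s.1 s.2.1))
    (V : ℝ) (hV : V = ∑ x, ∑ a, ∑ r, D x * (nu x a * (Dr x a r * rval r))) :
    (|(∑ z : Fin n → X × A × R, P z *
          ((n : ℝ)⁻¹ * ∑ k, Vhatk k (fun i => z ⟨i.1, i.isLt.trans k.isLt⟩) (z k))) - V|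
      = (n : ℝ)⁻¹ * |∑ z : Fin n → X × A × R, P z *
          ∑ k : Fin n, ∑ x, ∑ a, D x * (nu x a *
            ((1 - mu k (fun i => z ⟨i.1, i.isLt.trans k.isLt⟩) x a /
                  muhat k (fun i => z ⟨i.1, i.isLt.trans k.isLt⟩) x a) *
              (rhat x a - rstar x a)))|)
    ∧ (∀ (mu1 muhat1 : X → A → ℝ),
        (∀ k h, mu k h = mu1) → (∀ k h, muhat k h = muhat1) →
        |(∑ z : Fin n → X × A × R, P z *
            ((n : ℝ)⁻¹ * ∑ k, Vhatk k (fun i => z ⟨i.1, i.isLt.trans k.isLt⟩) (z k))) - V|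
          = |∑ x, ∑ a, D x * (nu x a *
              ((1 - mu1 x a / muhat1 x a) * (rhat x a - rstar x a)))|) :=
  stmt4_general n hn D nu Dr rval rhat mu muhat hD1 hmu1 hDr1 rstar hrstar P hP Vhatk hVhatk V hV
end

section
/- Suppose the exploration policy μ and the propensity estimator μ̂ are stationary, and the target policy ν is deterministic (ν(·|x) puts all mass on one action). Then Var_μ[V̂_DR] = (1/n)·( Var_{(x,a)∼ν}[ r*(x,a) + (1−ρ(x,a))Δ(x,a) ] + E_{(x,a)∼ν}[ (1/μ̂(a|x))·ρ(x,a)·Var_{r∼D(·|x,a)}[r] ] + E_{(x,a)∼ν}[ ((1−μ(a|x))/μ̂(a|x))·ρ(x,a)·Δ(x,a)² ] ). -/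
/-! The sample consists of `n` i.i.d. draws from the joint weight `D x · μ(a|x) · D(r|x,a)`, and
the variance of an i.i.d. sample mean is `1/n` times the one-draw variance `E[V̂²] - E[V̂]²`.
Conditionally on `x`, only the target action `ν(x)` carries a nonzero importance weight and the
reward enters `V̂` affinely, so `E[V̂ | x] = g x` while `E[V̂² | x] - g x²` splits into the reward
noise `ρ Var[r] / μ̂` and the action noise `(1 - μ) ρ Δ² / μ̂`. -/

open Finset

section SampleMean

variable {𝕜 S ι : Type*} [Fintype S] [Fintype ι] [DecidableEq ι]

lemma sum_prod_mul_prod [CommSemiring 𝕜] (p : S → 𝕜) (h : ι → S → 𝕜) :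
    ∑ z : ι → S, (∏ k, p (z k)) * ∏ k, h k (z k) = ∏ k, ∑ s, p s * h k s := by
  simp_rw [← prod_mul_distrib, Fintype.prod_sum]

lemma sum_prod_mul_apply [CommSemiring 𝕜] (p f : S → 𝕜) (hp : ∑ s, p s = 1) (c : ι) :
    ∑ z : ι → S, (∏ k, p (z k)) * f (z c) = ∑ s, p s * f s := by
  have h := sum_prod_mul_prod p (fun k s => if k = c then f s else 1)
  simp only [mul_ite, mul_one, Fintype.prod_ite_eq', sum_ite_irrel, hp] at h
  simpa using h

lemma sum_prod_mul_apply_mul_apply [CommSemiring 𝕜] (p f g : S → 𝕜) (hp : ∑ s, p s = 1)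
    {c d : ι} (hcd : c ≠ d) :
    ∑ z : ι → S, (∏ k, p (z k)) * (f (z c) * g (z d)) = (∑ s, p s * f s) * ∑ s, p s * g s := by
  have h := sum_prod_mul_prod p (fun k s => (if k = c then f s else 1) * if k = d then g s else 1)
  simp only [prod_mul_distrib, Fintype.prod_ite_eq'] at h
  have factor : ∀ k, ∑ s, p s * ((if k = c then f s else 1) * if k = d then g s else 1) =
      (if k = c then ∑ s, p s * f s else 1) * if k = d then ∑ s, p s * g s else 1 := by
    intro k
    by_cases hc : k = c
    · simp [hc, hcd]
    · by_cases hd : k = d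
      · simp [hd, hcd.symm]
      · simp [hc, hd, hp]
  rw [h, prod_congr rfl fun k _ => factor k, prod_mul_distrib, Fintype.prod_ite_eq',
    Fintype.prod_ite_eq']

lemma sum_prod_mul_sum_apply [CommSemiring 𝕜] (p f : S → 𝕜) (hp : ∑ s, p s = 1) :
    ∑ z : ι → S, (∏ k, p (z k)) * ∑ k, f (z k) = Fintype.card ι * ∑ s, p s * f s := by
  conv_lhs => simp only [mul_sum]
  rw [sum_comm]
  simp only [sum_prod_mul_apply p f hp, sum_const, card_univ, nsmul_eq_mul]

lemma sum_prod_mul_sum_apply_sq [CommRing 𝕜] (p f : S → 𝕜) (hp : ∑ s, p s = 1) :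
    ∑ z : ι → S, (∏ k, p (z k)) * (∑ k, f (z k)) ^ 2 =
      Fintype.card ι * ∑ s, p s * f s ^ 2
        + ((Fintype.card ι : 𝕜) ^ 2 - Fintype.card ι) * (∑ s, p s * f s) ^ 2 := by
  have pair : ∀ c d : ι, ∑ z : ι → S, (∏ k, p (z k)) * (f (z c) * f (z d)) =
      (∑ s, p s * f s) ^ 2 + if c = d then ∑ s, p s * f s ^ 2 - (∑ s, p s * f s) ^ 2 else 0 := by
    intro c d
    by_cases hcd : c = d
    · simp [hcd, ← sq, sum_prod_mul_apply p (f · ^ 2) hp]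
    · simp [hcd, sum_prod_mul_apply_mul_apply p f f hp hcd, sq]
  conv_lhs => simp only [sq, sum_mul_sum]
  conv_lhs => simp only [mul_sum]
  rw [sum_comm]
  have inner : ∀ c : ι, ∑ z : ι → S, ∑ d, (∏ k, p (z k)) * (f (z c) * f (z d)) =
      Fintype.card ι * (∑ s, p s * f s) ^ 2 + (∑ s, p s * f s ^ 2 - (∑ s, p s * f s) ^ 2) := by
    intro c
    rw [sum_comm]
    simp [pair, sum_add_distrib]
  simp only [inner, sum_const, card_univ, nsmul_eq_mul]
  ring

lemma variance_sampleMean_iid [Field 𝕜] (p f : S → 𝕜) (hp : ∑ s, p s = 1) (n : ℕ) :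
    (∑ z : Fin n → S, (∏ k, p (z k)) * ((n : 𝕜)⁻¹ * ∑ k, f (z k)) ^ 2)
      - (∑ z : Fin n → S, (∏ k, p (z k)) * ((n : 𝕜)⁻¹ * ∑ k, f (z k))) ^ 2
    = (n : 𝕜)⁻¹ * (∑ s, p s * f s ^ 2 - (∑ s, p s * f s) ^ 2) := by
  simp_rw [mul_pow, mul_left_comm _ ((n : 𝕜)⁻¹ ^ 2), mul_left_comm _ (n : 𝕜)⁻¹, ← mul_sum,
    sum_prod_mul_sum_apply p f hp, sum_prod_mul_sum_apply_sq p f hp, Fintype.card_fin]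
  -- `(n : 𝕜)⁻¹` is junk when `(n : 𝕜) = 0`, but then both sides vanish
  rcases eq_or_ne (n : 𝕜) 0 with hn | hn
  · simp [hn]
  · field_simp
    ring

end SampleMean

section Conditioning

variable {𝕜 ι : Type*} [CommRing 𝕜] [Fintype ι]

lemma sum_mul_affine (q v : ι → 𝕜) (hq : ∑ i, q i = 1) (α β γ : 𝕜) :
    ∑ i, q i * (α + β * (v i - γ)) = α + β * (∑ i, q i * v i - γ) := by
  simp only [mul_add, mul_sub, sum_add_distrib, sum_sub_distrib, ← sum_mul, hq, mul_left_comm _ β,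
    ← mul_sum]
  ring

lemma sum_mul_affine_sq (q v : ι → 𝕜) (hq : ∑ i, q i = 1) (α β γ : 𝕜) :
    ∑ i, q i * (α + β * (v i - γ)) ^ 2 =
      (α + β * (∑ i, q i * v i - γ)) ^ 2 + β ^ 2 * (∑ i, q i * v i ^ 2 - (∑ i, q i * v i) ^ 2) := by
  have expand : ∀ i, q i * (α + β * (v i - γ)) ^ 2 =
      (α - β * γ) ^ 2 * q i + 2 * (α - β * γ) * β * (q i * v i) + β ^ 2 * (q i * v i ^ 2) :=
    fun i => by ring
  simp only [expand, sum_add_distrib, ← mul_sum, hq]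
  ring

lemma sum_mul_eq_of_forall_ne (q F : ι → 𝕜) (hq : ∑ i, q i = 1) (i₀ : ι) (c : 𝕜)
    (hF : ∀ i ≠ i₀, F i = c) : ∑ i, q i * F i = q i₀ * F i₀ + (1 - q i₀) * c := by
  have h : ∑ i, q i * (F i - c) = q i₀ * (F i₀ - c) :=
    sum_eq_single i₀ (fun i _ hi => by rw [hF i hi, sub_self, mul_zero]) (by simp)
  simp only [mul_sub, sum_sub_distrib, ← sum_mul, hq] at h
  linear_combination h

end Conditioning

lemma sum_joint_mul_eq_iterated {𝕜 X A R : Type*} [CommSemiring 𝕜] [Fintype X] [Fintype A]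
    [Fintype R] (D : X → 𝕜) (mu : X → A → 𝕜) (Dr : X → A → R → 𝕜) (F : X × A × R → 𝕜) :
    ∑ s : X × A × R, D s.1 * (mu s.1 s.2.1 * Dr s.1 s.2.1 s.2.2) * F s =
      ∑ x, D x * ∑ a, mu x a * ∑ r, Dr x a r * F (x, a, r) := by
  simp only [Fintype.sum_prod_type, mul_sum, mul_assoc]

section DoublyRobust

variable {𝕜 A R : Type*} [Field 𝕜] [Fintype A] [Fintype R] [DecidableEq A]
  (mu muhat rhat : A → 𝕜) (Dr : A → R → 𝕜) (rval : R → 𝕜) (a₀ : A)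

-- The doubly robust term `V̂` in a fixed context, `a₀` being the target action `ν(x)`.
def drTerm (a : A) (r : R) : 𝕜 :=
  rhat a₀ + (if a = a₀ then 1 else 0) / muhat a * (rval r - rhat a)

variable {mu Dr}

lemma sum_mul_sum_mul_drTerm (hmu : ∑ a, mu a = 1) (hDr : ∀ a, ∑ r, Dr a r = 1) :
    ∑ a, mu a * ∑ r, Dr a r * drTerm muhat rhat rval a₀ a r =
      rhat a₀ + mu a₀ / muhat a₀ * (∑ r, Dr a₀ r * rval r - rhat a₀) := by
  have hcond (a : A) : ∑ r, Dr a r * drTerm muhat rhat rval a₀ a r =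
      rhat a₀ + (if a = a₀ then 1 else 0) / muhat a * (∑ r, Dr a r * rval r - rhat a) :=
    sum_mul_affine (Dr a) rval (hDr a) _ _ _
  simp only [hcond]
  rw [sum_mul_eq_of_forall_ne mu _ hmu a₀ (rhat a₀) fun a ha => by simp [ha]]
  simp only [if_pos]
  ring

lemma sum_mul_sum_mul_drTerm_sq (hmu : ∑ a, mu a = 1) (hDr : ∀ a, ∑ r, Dr a r = 1) :
    ∑ a, mu a * ∑ r, Dr a r * drTerm muhat rhat rval a₀ a r ^ 2 =
      (rhat a₀ + mu a₀ / muhat a₀ * (∑ r, Dr a₀ r * rval r - rhat a₀)) ^ 2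
        + (muhat a₀)⁻¹ * (mu a₀ / muhat a₀ *
            (∑ r, Dr a₀ r * rval r ^ 2 - (∑ r, Dr a₀ r * rval r) ^ 2))
        + (1 - mu a₀) / muhat a₀ * (mu a₀ / muhat a₀ * (rhat a₀ - ∑ r, Dr a₀ r * rval r) ^ 2) := by
  have hcond (a : A) : ∑ r, Dr a r * drTerm muhat rhat rval a₀ a r ^ 2 =
      (rhat a₀ + (if a = a₀ then 1 else 0) / muhat a * (∑ r, Dr a r * rval r - rhat a)) ^ 2
        + ((if a = a₀ then 1 else 0) / muhat a) ^ 2 *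
          (∑ r, Dr a r * rval r ^ 2 - (∑ r, Dr a r * rval r) ^ 2) :=
    sum_mul_affine_sq (Dr a) rval (hDr a) _ _ _
  simp only [hcond]
  rw [sum_mul_eq_of_forall_ne mu _ hmu a₀ (rhat a₀ ^ 2) fun a ha => by simp [ha]]
  simp only [if_pos]
  ring

end DoublyRobust

theorem stmt5_general {X A R : Type*} [Fintype X] [Fintype A] [Fintype R] [DecidableEq A]
    (n : ℕ)
    (D : X → ℝ) (pol : X → A) (mu muhat : X → A → ℝ)
    (Dr : X → A → R → ℝ) (rval : R → ℝ) (rhat : X → A → ℝ)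
    (hD1 : ∑ x, D x = 1)
    (hmu1 : ∀ x, ∑ a, mu x a = 1)
    (hDr1 : ∀ x a, ∑ r, Dr x a r = 1)
    (rstar : X → A → ℝ) (hrstar : ∀ x a, rstar x a = ∑ r, Dr x a r * rval r)
    (Δ : X → A → ℝ) (hΔ : ∀ x a, Δ x a = rhat x a - rstar x a)
    (ρ : X → A → ℝ) (hρ : ∀ x a, ρ x a = mu x a / muhat x a)
    (varr : X → A → ℝ)
    (hvarr : ∀ x a, varr x a = (∑ r, Dr x a r * (rval r)^2) - (rstar x a)^2)
    (Vhat : X → A → R → ℝ)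
    (hVhat : ∀ x a r, Vhat x a r =
      rhat x (pol x) + ((if a = pol x then (1:ℝ) else 0) / muhat x a) * (rval r - rhat x a))
    (P : (Fin n → X × A × R) → ℝ)
    (hP : ∀ z, P z = ∏ k, D (z k).1 * (mu (z k).1 (z k).2.1 * Dr (z k).1 (z k).2.1 (z k).2.2))
    (g : X → ℝ)
    (hg : ∀ x, g x = rstar x (pol x) + (1 - ρ x (pol x)) * Δ x (pol x)) :
    (∑ z : Fin n → X × A × R, P z *
        ((n : ℝ)⁻¹ * ∑ k, Vhat (z k).1 (z k).2.1 (z k).2.2)^2)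
      - (∑ z : Fin n → X × A × R, P z *
          ((n : ℝ)⁻¹ * ∑ k, Vhat (z k).1 (z k).2.1 (z k).2.2))^2
    = (n : ℝ)⁻¹ * (
        ((∑ x, D x * (g x)^2) - (∑ x, D x * g x)^2)
        + (∑ x, D x * ((muhat x (pol x))⁻¹ * (ρ x (pol x) * varr x (pol x))))
        + (∑ x, D x * (((1 - mu x (pol x)) / muhat x (pol x)) *
              (ρ x (pol x) * (Δ x (pol x))^2)))) := by
  obtain rfl : Vhat = fun x => drTerm (muhat x) (rhat x) rval (pol x) :=
    funext fun x => funext fun a => funext (hVhat x a)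
  have hmean (x : X) :
      ∑ a, mu x a * ∑ r, Dr x a r * drTerm (muhat x) (rhat x) rval (pol x) a r = g x := by
    rw [sum_mul_sum_mul_drTerm _ _ _ _ (hmu1 x) (hDr1 x), hg, hρ, hΔ, hrstar]
    ring
  have hsq (x : X) :
      ∑ a, mu x a * ∑ r, Dr x a r * drTerm (muhat x) (rhat x) rval (pol x) a r ^ 2 =
        g x ^ 2 + (muhat x (pol x))⁻¹ * (ρ x (pol x) * varr x (pol x))
          + (1 - mu x (pol x)) / muhat x (pol x) * (ρ x (pol x) * Δ x (pol x) ^ 2) := by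
    rw [sum_mul_sum_mul_drTerm_sq _ _ _ _ (hmu1 x) (hDr1 x), hg, hρ, hΔ, hvarr, hrstar]
    ring
  have hp1 : ∑ s : X × A × R, D s.1 * (mu s.1 s.2.1 * Dr s.1 s.2.1 s.2.2) = 1 := by
    simpa [hDr1, hmu1, hD1] using sum_joint_mul_eq_iterated D mu Dr fun _ => (1 : ℝ)
  simp only [hP]
  refine (variance_sampleMean_iid (fun s : X × A × R => D s.1 * (mu s.1 s.2.1 * Dr s.1 s.2.1 s.2.2))
    (fun s => drTerm (muhat s.1) (rhat s.1) rval (pol s.1) s.2.1 s.2.2) hp1 n).trans ?_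
  rw [sum_joint_mul_eq_iterated D mu Dr, sum_joint_mul_eq_iterated D mu Dr]
  simp only [hmean, hsq, mul_add, sum_add_distrib]
  ring

/-- Variance of the doubly robust estimator for a stationary exploration policy and a
deterministic target policy `pol`. -/
theorem stmt5 {X A R : Type*} [Fintype X] [Fintype A] [Fintype R] [DecidableEq A]
    (n : ℕ) (hn : 0 < n)
    (D : X → ℝ) (pol : X → A) (mu muhat : X → A → ℝ)
    (Dr : X → A → R → ℝ) (rval : R → ℝ) (rhat : X → A → ℝ)
    (hD0 : ∀ x, 0 ≤ D x) (hD1 : ∑ x, D x = 1)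
    (hmu0 : ∀ x a, 0 ≤ mu x a) (hmu1 : ∀ x, ∑ a, mu x a = 1)
    (hDr0 : ∀ x a r, 0 ≤ Dr x a r) (hDr1 : ∀ x a, ∑ r, Dr x a r = 1)
    (hrval0 : ∀ r, 0 ≤ rval r) (hrval1 : ∀ r, rval r ≤ 1)
    (hrhat0 : ∀ x a, 0 ≤ rhat x a) (hrhat1 : ∀ x a, rhat x a ≤ 1)
    (hmuhat : ∀ x a, 0 < muhat x a)
    (hpos : ∀ x, 0 < mu x (pol x))
    (rstar : X → A → ℝ) (hrstar : ∀ x a, rstar x a = ∑ r, Dr x a r * rval r)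
    (Δ : X → A → ℝ) (hΔ : ∀ x a, Δ x a = rhat x a - rstar x a)
    (ρ : X → A → ℝ) (hρ : ∀ x a, ρ x a = mu x a / muhat x a)
    (varr : X → A → ℝ)
    (hvarr : ∀ x a, varr x a = (∑ r, Dr x a r * (rval r)^2) - (rstar x a)^2)
    (Vhat : X → A → R → ℝ)
    (hVhat : ∀ x a r, Vhat x a r =
      rhat x (pol x) + ((if a = pol x then (1:ℝ) else 0) / muhat x a) * (rval r - rhat x a))
    (P : (Fin n → X × A × R) → ℝ)
    (hP : ∀ z, P z = ∏ k, D (z k).1 * (mu (z k).1 (z k).2.1 * Dr (z k).1 (z k).2.1 (z k).2.2))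
    (g : X → ℝ)
    (hg : ∀ x, g x = rstar x (pol x) + (1 - ρ x (pol x)) * Δ x (pol x)) :
    (∑ z : Fin n → X × A × R, P z *
        ((n : ℝ)⁻¹ * ∑ k, Vhat (z k).1 (z k).2.1 (z k).2.2)^2)
      - (∑ z : Fin n → X × A × R, P z *
          ((n : ℝ)⁻¹ * ∑ k, Vhat (z k).1 (z k).2.1 (z k).2.2))^2
    = (n : ℝ)⁻¹ * (
        ((∑ x, D x * (g x)^2) - (∑ x, D x * g x)^2)
        + (∑ x, D x * ((muhat x (pol x))⁻¹ * (ρ x (pol x) * varr x (pol x))))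
        + (∑ x, D x * (((1 - mu x (pol x)) / muhat x (pol x)) *
              (ρ x (pol x) * (Δ x (pol x))^2)))) :=
  stmt5_general n D pol mu muhat Dr rval rhat hD1 hmu1 hDr1 rstar hrstar Δ hΔ ρ hρ varr hvarr Vhat
    hVhat P hP g hg
end

section
/- Assume (i) E_{(x,a)∼ν}[|Δ(x,a)|] ≤ δ_Δ, (ii) |1−ρ_k(x,a)| ≤ δ_ρ almost surely for all k, (iii) E_{(x,a)∼ν}[ E_{r∼D(·|x,a)}[(r̂(x,a)−r)²] ] ≤ e_r̂ almost surely, and (iv) ρ_k(x,a) ≤ ρ_max almost surely. Then for each k, |E_k[V̂_k] − V| ≤ δ_ρ·δ_Δ and Var_k[V̂_k] ≤ Var_{x∼D}[r*(x,ν)] + 2δ_ρ δ_Δ + M ρ_max e_r̂, where M bounds ν(a|x)/μ̂_k(a|x). -/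
/-!
Conditionally on the context `x`, averaging `V̂` over the reward gives
`Σ_a' ν r̂ + w (r* - r̂)` with `w = ν/μ̂`, and averaging over the logged action `a ∼ μ` then
turns `μ w` into `ρ ν`: the conditional mean is `r*(x,ν) + Σ_a (1 - ρ) ν Δ`, within
`δ_ρ Σ_a ν |Δ|` of `r*(x,ν)`, which gives the bias bound. The conditional second moment
exceeds the squared conditional mean by `Σ_a ρ w ν E(r̂ - r)² - m²` with `m = Σ_a ρ ν Δ`,
and the first term is at most `M ρ_max` times the `ν`-weighted squared error. Bounding the
variance by the mean square deviation from `c = E_x r*(x,ν)` leaves a cross term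
`2 (Σ_a ν r̂ - c)(d - m)`, `d = Σ_a ν Δ`, which is at most `2 δ_ρ Σ_a ν |Δ|` because both
`Σ_a ν r̂` and `c` lie in `[0, 1]`.
-/

open Finset

section FiniteDistribution

variable {ι : Type*} [Fintype ι] {p : ι → ℝ}

lemma sum_mul_mem_Icc (hp0 : ∀ i, 0 ≤ p i) (hp1 : ∑ i, p i = 1) {f : ι → ℝ}
    (hf : ∀ i, f i ∈ Set.Icc (0 : ℝ) 1) : ∑ i, p i * f i ∈ Set.Icc (0 : ℝ) 1 := by
  simpa only [smul_eq_mul] using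
    (convex_Icc (0 : ℝ) 1).sum_mem (fun i _ => hp0 i) hp1 fun i _ => hf i

lemma sum_mul_sub_sq_eq (hp1 : ∑ i, p i = 1) (f : ι → ℝ) (c : ℝ) :
    ∑ i, p i * (f i - c) ^ 2 = ∑ i, p i * f i ^ 2 - 2 * c * ∑ i, p i * f i + c ^ 2 := by
  have h : ∀ i, p i * (f i - c) ^ 2 = p i * f i ^ 2 - 2 * c * (p i * f i) + c ^ 2 * p i :=
    fun i => by ring
  simp only [h, sum_add_distrib, sum_sub_distrib, ← mul_sum, hp1, mul_one]

lemma sum_mul_add_mul_sub (hp1 : ∑ i, p i = 1) (f : ι → ℝ) (c w b : ℝ) :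
    ∑ i, p i * (c + w * (f i - b)) = c + w * (∑ i, p i * f i - b) := by
  simp only [mul_add, mul_sub, sum_add_distrib, sum_sub_distrib, ← sum_mul, hp1]
  simp only [mul_left_comm (p _) w, ← mul_sum]
  ring

lemma sum_mul_add_mul_sub_sq (hp1 : ∑ i, p i = 1) (f : ι → ℝ) (c w b : ℝ) :
    ∑ i, p i * (c + w * (f i - b)) ^ 2
      = c ^ 2 + 2 * c * w * (∑ i, p i * f i - b) + w ^ 2 * ∑ i, p i * (b - f i) ^ 2 := by
  have h : ∀ i, p i * (c + w * (f i - b)) ^ 2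
      = p i * (c ^ 2 + 2 * c * w * (f i - b)) + w ^ 2 * (p i * (b - f i) ^ 2) := fun i => by ring
  simp only [h, sum_add_distrib, ← mul_sum]
  rw [sum_mul_add_mul_sub hp1]

lemma sum_mul_mul_le_mul_mul_sum {ρ w f : ι → ℝ} {ρmax M : ℝ} (hρ0 : ∀ i, 0 ≤ ρ i)
    (hw0 : ∀ i, 0 ≤ w i) (hf0 : ∀ i, 0 ≤ f i) (hρmax : ∀ i, ρ i ≤ ρmax) (hM : ∀ i, w i ≤ M) :
    ∑ i, ρ i * w i * f i ≤ M * (ρmax * ∑ i, f i) := by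
  rw [mul_sum, mul_sum]
  refine sum_le_sum fun i _ => ?_
  have h : ρ i * w i ≤ ρmax * M :=
    mul_le_mul (hρmax i) (hM i) (hw0 i) ((hρ0 i).trans (hρmax i))
  calc ρ i * w i * f i ≤ ρmax * M * f i := mul_le_mul_of_nonneg_right h (hf0 i)
    _ = M * (ρmax * f i) := by ring

lemma abs_sum_mul_sub_sum_mul_le (hp0 : ∀ i, 0 ≤ p i) {g h t : ι → ℝ} {δ T : ℝ} (hδ : 0 ≤ δ)
    (hgh : ∀ i, |g i - h i| ≤ δ * t i) (ht : ∑ i, p i * t i ≤ T) :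
    |∑ i, p i * g i - ∑ i, p i * h i| ≤ δ * T :=
  calc |∑ i, p i * g i - ∑ i, p i * h i| = |∑ i, p i * (g i - h i)| := by
        simp only [mul_sub, sum_sub_distrib]
    _ ≤ ∑ i, |p i * (g i - h i)| := abs_sum_le_sum_abs _ _
    _ ≤ ∑ i, p i * (δ * t i) := sum_le_sum fun i _ => by
        rw [abs_mul, abs_of_nonneg (hp0 i)]
        exact mul_le_mul_of_nonneg_left (hgh i) (hp0 i)
    _ = δ * ∑ i, p i * t i := by simp only [mul_sum, mul_left_comm]
    _ ≤ δ * T := mul_le_mul_of_nonneg_left ht hδ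

/-- A comparison form of the law of total variance: `g` and `s` are the conditional first and
second moments of a variable, `h` a reference conditional mean. -/
lemma sum_mul_sub_sq_sum_mul_le (hp0 : ∀ i, 0 ≤ p i) (hp1 : ∑ i, p i = 1) {g s h k : ι → ℝ}
    (hpt : ∀ i, s i - g i ^ 2 + (g i - ∑ j, p j * h j) ^ 2
      ≤ (h i - ∑ j, p j * h j) ^ 2 + k i) :
    ∑ i, p i * s i - (∑ i, p i * g i) ^ 2
      ≤ (∑ i, p i * h i ^ 2 - (∑ i, p i * h i) ^ 2) + ∑ i, p i * k i := by
  set c := ∑ j, p j * h j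
  have hg := sum_mul_sub_sq_eq hp1 g c
  have hh := sum_mul_sub_sq_eq hp1 h c
  have hsum : ∑ i, p i * (s i - g i ^ 2 + (g i - c) ^ 2) ≤ ∑ i, p i * ((h i - c) ^ 2 + k i) :=
    sum_le_sum fun i _ => mul_le_mul_of_nonneg_left (hpt i) (hp0 i)
  simp only [mul_add, mul_sub, sum_add_distrib, sum_sub_distrib] at hsum
  linarith [sq_nonneg (∑ i, p i * g i - c)]

end FiniteDistribution

/-- The cross term `2 u (d - m)` of `(u - m)² - m² = (u - d)² + 2 u (d - m) - d²` is at most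
`2 |d - m|` once `|u| ≤ 1`. -/
lemma sub_sq_sub_sq_le {u : ℝ} (hu : |u| ≤ 1) (m d : ℝ) :
    (u - m) ^ 2 - m ^ 2 ≤ (u - d) ^ 2 + 2 * |d - m| := by
  have h : u * (d - m) ≤ |d - m| := by
    calc u * (d - m) ≤ |u| * |d - m| := by rw [← abs_mul]; exact le_abs_self _
      _ ≤ |d - m| := mul_le_of_le_one_left (abs_nonneg _) hu
  linarith [sq_nonneg d]

namespace DoublyRobust

variable {A R : Type*} [Fintype A] [Fintype R] {nu mu muhat rhat rstar Δ ρ : A → ℝ}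
  {Dr : A → R → ℝ} {rval : R → ℝ} {Vhat : A → R → ℝ}

lemma condMean_eq (hmu1 : ∑ a, mu a = 1) (hDr1 : ∀ a, ∑ r, Dr a r = 1)
    (hrstar : ∀ a, rstar a = ∑ r, Dr a r * rval r) (hΔ : ∀ a, Δ a = rhat a - rstar a)
    (hρ : ∀ a, ρ a = mu a / muhat a)
    (hVhat : ∀ a r, Vhat a r = (∑ a', nu a' * rhat a') + (nu a / muhat a) * (rval r - rhat a)) :
    ∑ a, mu a * ∑ r, Dr a r * Vhat a r = ∑ a, nu a * rhat a - ∑ a, ρ a * (nu a * Δ a) := by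
  have h : ∀ a, mu a * ∑ r, Dr a r * Vhat a r
      = (∑ a', nu a' * rhat a') * mu a - ρ a * (nu a * Δ a) := fun a => by
    simp only [hVhat, sum_mul_add_mul_sub (hDr1 a), ← hrstar, hρ, hΔ]
    ring
  simp only [h, sum_sub_distrib, ← mul_sum, hmu1, mul_one]

lemma condSecondMoment_eq (hmu1 : ∑ a, mu a = 1) (hDr1 : ∀ a, ∑ r, Dr a r = 1)
    (hrstar : ∀ a, rstar a = ∑ r, Dr a r * rval r) (hΔ : ∀ a, Δ a = rhat a - rstar a)
    (hρ : ∀ a, ρ a = mu a / muhat a)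
    (hVhat : ∀ a r, Vhat a r = (∑ a', nu a' * rhat a') + (nu a / muhat a) * (rval r - rhat a)) :
    ∑ a, mu a * ∑ r, Dr a r * Vhat a r ^ 2
      = (∑ a, nu a * rhat a) ^ 2 - 2 * (∑ a, nu a * rhat a) * ∑ a, ρ a * (nu a * Δ a)
        + ∑ a, ρ a * (nu a / muhat a) * (nu a * ∑ r, Dr a r * (rhat a - rval r) ^ 2) := by
  have h : ∀ a, mu a * ∑ r, Dr a r * Vhat a r ^ 2
      = (∑ a', nu a' * rhat a') ^ 2 * mu a
        - 2 * (∑ a', nu a' * rhat a') * (ρ a * (nu a * Δ a))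
        + ρ a * (nu a / muhat a) * (nu a * ∑ r, Dr a r * (rhat a - rval r) ^ 2) := fun a => by
    simp only [hVhat, sum_mul_add_mul_sub_sq (hDr1 a), ← hrstar, hρ, hΔ]
    ring
  simp only [h, sum_add_distrib, sum_sub_distrib, ← mul_sum, hmu1, mul_one]

lemma abs_condMean_sub_le (hnu0 : ∀ a, 0 ≤ nu a) (hmu1 : ∑ a, mu a = 1)
    (hDr1 : ∀ a, ∑ r, Dr a r = 1) (hrstar : ∀ a, rstar a = ∑ r, Dr a r * rval r)
    (hΔ : ∀ a, Δ a = rhat a - rstar a) (hρ : ∀ a, ρ a = mu a / muhat a)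
    (hVhat : ∀ a r, Vhat a r = (∑ a', nu a' * rhat a') + (nu a / muhat a) * (rval r - rhat a))
    {δρ : ℝ} (hδρ : ∀ a, |1 - ρ a| ≤ δρ) :
    |∑ a, mu a * ∑ r, Dr a r * Vhat a r - ∑ a, nu a * rstar a| ≤ δρ * ∑ a, nu a * |Δ a| := by
  have h : ∑ a, nu a * rhat a - ∑ a, ρ a * (nu a * Δ a) - ∑ a, nu a * rstar a
      = ∑ a, (1 - ρ a) * (nu a * Δ a) := by
    simp only [← sum_sub_distrib]
    exact sum_congr rfl fun a _ => by rw [hΔ]; ring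
  rw [condMean_eq hmu1 hDr1 hrstar hΔ hρ hVhat, h, mul_sum]
  refine (abs_sum_le_sum_abs _ _).trans (sum_le_sum fun a _ => ?_)
  rw [abs_mul, abs_mul, abs_of_nonneg (hnu0 a)]
  exact mul_le_mul_of_nonneg_right (hδρ a) (mul_nonneg (hnu0 a) (abs_nonneg _))

lemma condSecondMoment_sub_sq_add_sq_le (hnu0 : ∀ a, 0 ≤ nu a) (hnu1 : ∑ a, nu a = 1)
    (hmu0 : ∀ a, 0 ≤ mu a) (hmu1 : ∑ a, mu a = 1) (hDr0 : ∀ a r, 0 ≤ Dr a r)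
    (hDr1 : ∀ a, ∑ r, Dr a r = 1) (hrhat : ∀ a, rhat a ∈ Set.Icc (0 : ℝ) 1)
    (hmuhat : ∀ a, 0 < muhat a) (hrstar : ∀ a, rstar a = ∑ r, Dr a r * rval r)
    (hΔ : ∀ a, Δ a = rhat a - rstar a) (hρ : ∀ a, ρ a = mu a / muhat a)
    (hVhat : ∀ a r, Vhat a r = (∑ a', nu a' * rhat a') + (nu a / muhat a) * (rval r - rhat a))
    {δρ ρmax M c : ℝ} (hδρ : ∀ a, |1 - ρ a| ≤ δρ) (hρmax : ∀ a, ρ a ≤ ρmax)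
    (hM : ∀ a, nu a / muhat a ≤ M) (hc : c ∈ Set.Icc (0 : ℝ) 1) :
    ∑ a, mu a * ∑ r, Dr a r * Vhat a r ^ 2 - (∑ a, mu a * ∑ r, Dr a r * Vhat a r) ^ 2
        + (∑ a, mu a * ∑ r, Dr a r * Vhat a r - c) ^ 2
      ≤ (∑ a, nu a * rstar a - c) ^ 2 + (2 * (δρ * ∑ a, nu a * |Δ a|)
        + M * (ρmax * ∑ a, nu a * ∑ r, Dr a r * (rhat a - rval r) ^ 2)) := by
  have hbias := abs_condMean_sub_le hnu0 hmu1 hDr1 hrstar hΔ hρ hVhat hδρ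
  rw [condMean_eq hmu1 hDr1 hrstar hΔ hρ hVhat] at hbias ⊢
  rw [condSecondMoment_eq hmu1 hDr1 hrstar hΔ hρ hVhat]
  have hS := sum_mul_mul_le_mul_mul_sum
    (f := fun a => nu a * ∑ r, Dr a r * (rhat a - rval r) ^ 2)
    (fun a => hρ a ▸ div_nonneg (hmu0 a) (hmuhat a).le)
    (fun a => div_nonneg (hnu0 a) (hmuhat a).le)
    (fun a => mul_nonneg (hnu0 a) (sum_nonneg fun r _ => mul_nonneg (hDr0 a r) (sq_nonneg _)))
    hρmax hM
  have hsum_rstar : ∑ a, nu a * rstar a = ∑ a, nu a * rhat a - ∑ a, nu a * Δ a := by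
    simp only [← sum_sub_distrib, hΔ, mul_sub, sub_sub_cancel]
  obtain ⟨hC0, hC1⟩ := sum_mul_mem_Icc hnu0 hnu1 hrhat
  have hu : |∑ a, nu a * rhat a - c| ≤ 1 := abs_le.mpr ⟨by linarith [hc.2], by linarith [hc.1]⟩
  have hcross := sub_sq_sub_sq_le hu (∑ a, ρ a * (nu a * Δ a)) (∑ a, nu a * Δ a)
  rw [hsum_rstar] at hbias ⊢
  rw [show ∀ C d m : ℝ, C - m - (C - d) = d - m by intros; ring] at hbias
  linarith

end DoublyRobust

theorem stmt7_general {X A R : Type*} [Fintype X] [Fintype A] [Fintype R]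
    (D : X → ℝ) (nu : X → A → ℝ) (mu : X → A → ℝ)
    (Dr : X → A → R → ℝ) (rval : R → ℝ)
    (rhat : X → A → ℝ) (muhat : X → A → ℝ)
    (M δΔ δρ ρmax e : ℝ)
    (hD0 : ∀ x, 0 ≤ D x) (hD1 : ∑ x, D x = 1)
    (hnu0 : ∀ x a, 0 ≤ nu x a) (hnu1 : ∀ x, ∑ a, nu x a = 1)
    (hmu0 : ∀ x a, 0 ≤ mu x a) (hmu1 : ∀ x, ∑ a, mu x a = 1)
    (hDr0 : ∀ x a r, 0 ≤ Dr x a r) (hDr1 : ∀ x a, ∑ r, Dr x a r = 1)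
    (hrval0 : ∀ r, 0 ≤ rval r) (hrval1 : ∀ r, rval r ≤ 1)
    (hrhat0 : ∀ x a, 0 ≤ rhat x a) (hrhat1 : ∀ x a, rhat x a ≤ 1)
    (hmuhat : ∀ x a, 0 < muhat x a)
    (rstar : X → A → ℝ) (hrstar : ∀ x a, rstar x a = ∑ r, Dr x a r * rval r)
    (Δ : X → A → ℝ) (hΔ : ∀ x a, Δ x a = rhat x a - rstar x a)
    (ρ : X → A → ℝ) (hρ : ∀ x a, ρ x a = mu x a / muhat x a)
    (rnux : X → ℝ) (hrnux : ∀ x, rnux x = ∑ a, nu x a * rstar x a)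
    (V : ℝ) (hV : V = ∑ x, ∑ a, D x * (nu x a * rstar x a))
    (Vhat : X → A → R → ℝ)
    (hVhat : ∀ x a r, Vhat x a r =
      (∑ a', nu x a' * rhat x a') + (nu x a / muhat x a) * (rval r - rhat x a))
    -- Assumptions 1 and 2
    (hδΔ : ∑ x, ∑ a, D x * (nu x a * |Δ x a|) ≤ δΔ)
    (hδρ : ∀ x a, |1 - ρ x a| ≤ δρ)
    (he : ∑ x, ∑ a, D x * (nu x a * ∑ r, Dr x a r * (rhat x a - rval r)^2) ≤ e)
    (hρmax : ∀ x a, ρ x a ≤ ρmax)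
    (hM : ∀ x a, nu x a / muhat x a ≤ M) :
    |(∑ x, ∑ a, ∑ r, D x * (mu x a * (Dr x a r * Vhat x a r))) - V| ≤ δρ * δΔ
    ∧ (∑ x, ∑ a, ∑ r, D x * (mu x a * (Dr x a r * (Vhat x a r)^2)))
        - (∑ x, ∑ a, ∑ r, D x * (mu x a * (Dr x a r * Vhat x a r)))^2
      ≤ ((∑ x, D x * (rnux x)^2) - (∑ x, D x * rnux x)^2)
        + 2 * (δρ * δΔ) + M * (ρmax * e) := by
  obtain ⟨x₀, -⟩ := nonempty_of_sum_ne_zero (hD1.trans_ne one_ne_zero)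
  obtain ⟨a₀, -⟩ := nonempty_of_sum_ne_zero ((hnu1 x₀).trans_ne one_ne_zero)
  have hδρ0 : 0 ≤ δρ := (abs_nonneg _).trans (hδρ x₀ a₀)
  have hMρmax : 0 ≤ M * ρmax :=
    mul_nonneg ((div_nonneg (hnu0 x₀ a₀) (hmuhat x₀ a₀).le).trans (hM x₀ a₀))
      ((hρ x₀ a₀ ▸ div_nonneg (hmu0 x₀ a₀) (hmuhat x₀ a₀).le).trans (hρmax x₀ a₀))
  have hrnux01 : ∀ x, rnux x ∈ Set.Icc (0 : ℝ) 1 := fun x => hrnux x ▸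
    sum_mul_mem_Icc (hnu0 x) (hnu1 x) fun a => hrstar x a ▸
      sum_mul_mem_Icc (hDr0 x a) (hDr1 x a) fun r => ⟨hrval0 r, hrval1 r⟩
  simp only [← mul_sum, ← hrnux] at hV hδΔ he ⊢
  subst hV
  refine ⟨abs_sum_mul_sub_sum_mul_le hD0 hδρ0 (fun x => hrnux x ▸
    DoublyRobust.abs_condMean_sub_le (hnu0 x) (hmu1 x) (hDr1 x) (hrstar x) (hΔ x) (hρ x)
      (hVhat x) (hδρ x)) hδΔ, ?_⟩
  refine (sum_mul_sub_sq_sum_mul_le hD0 hD1 fun x => hrnux x ▸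
    DoublyRobust.condSecondMoment_sub_sq_add_sq_le (hnu0 x) (hnu1 x) (hmu0 x) (hmu1 x)
      (hDr0 x) (hDr1 x) (fun a => ⟨hrhat0 x a, hrhat1 x a⟩) (hmuhat x) (hrstar x) (hΔ x) (hρ x)
      (hVhat x) (hδρ x) (hρmax x) (hM x) (sum_mul_mem_Icc hD0 hD1 hrnux01)).trans ?_
  simp only [mul_add, sum_add_distrib, mul_left_comm (D _), ← mul_sum]
  linarith [mul_le_mul_of_nonneg_left hδΔ hδρ0, mul_le_mul_of_nonneg_left he hMρmax]

/-- Per-term bias and variance bounds for the doubly robust term under moment and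
ratio assumptions (Lemma 3.4). -/
theorem stmt7 {X A R : Type*} [Fintype X] [Fintype A] [Fintype R]
    (D : X → ℝ) (nu : X → A → ℝ) (mu : X → A → ℝ)
    (Dr : X → A → R → ℝ) (rval : R → ℝ)
    (rhat : X → A → ℝ) (muhat : X → A → ℝ)
    (M δΔ δρ ρmax e : ℝ)
    (hD0 : ∀ x, 0 ≤ D x) (hD1 : ∑ x, D x = 1)
    (hnu0 : ∀ x a, 0 ≤ nu x a) (hnu1 : ∀ x, ∑ a, nu x a = 1)
    (hmu0 : ∀ x a, 0 ≤ mu x a) (hmu1 : ∀ x, ∑ a, mu x a = 1)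
    (hDr0 : ∀ x a r, 0 ≤ Dr x a r) (hDr1 : ∀ x a, ∑ r, Dr x a r = 1)
    (hrval0 : ∀ r, 0 ≤ rval r) (hrval1 : ∀ r, rval r ≤ 1)
    (hrhat0 : ∀ x a, 0 ≤ rhat x a) (hrhat1 : ∀ x a, rhat x a ≤ 1)
    (hmuhat : ∀ x a, 0 < muhat x a)
    (hpos : ∀ x a, 0 < nu x a → 0 < mu x a)
    (rstar : X → A → ℝ) (hrstar : ∀ x a, rstar x a = ∑ r, Dr x a r * rval r)
    (Δ : X → A → ℝ) (hΔ : ∀ x a, Δ x a = rhat x a - rstar x a)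
    (ρ : X → A → ℝ) (hρ : ∀ x a, ρ x a = mu x a / muhat x a)
    (rnux : X → ℝ) (hrnux : ∀ x, rnux x = ∑ a, nu x a * rstar x a)
    (V : ℝ) (hV : V = ∑ x, ∑ a, D x * (nu x a * rstar x a))
    (Vhat : X → A → R → ℝ)
    (hVhat : ∀ x a r, Vhat x a r =
      (∑ a', nu x a' * rhat x a') + (nu x a / muhat x a) * (rval r - rhat x a))
    -- Assumptions 1 and 2
    (hδΔ : ∑ x, ∑ a, D x * (nu x a * |Δ x a|) ≤ δΔ)
    (hδρ : ∀ x a, |1 - ρ x a| ≤ δρ)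
    (he : ∑ x, ∑ a, D x * (nu x a * ∑ r, Dr x a r * (rhat x a - rval r)^2) ≤ e)
    (hρmax : ∀ x a, ρ x a ≤ ρmax)
    (hM : ∀ x a, nu x a / muhat x a ≤ M) :
    |(∑ x, ∑ a, ∑ r, D x * (mu x a * (Dr x a r * Vhat x a r))) - V| ≤ δρ * δΔ
    ∧ (∑ x, ∑ a, ∑ r, D x * (mu x a * (Dr x a r * (Vhat x a r)^2)))
        - (∑ x, ∑ a, ∑ r, D x * (mu x a * (Dr x a r * Vhat x a r)))^2
      ≤ ((∑ x, D x * (rnux x)^2) - (∑ x, D x * rnux x)^2)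
        + 2 * (δρ * δΔ) + M * (ρmax * e) :=
  stmt7_general D nu mu Dr rval rhat muhat M δΔ δρ ρmax e hD0 hD1 hnu0 hnu1 hmu0 hmu1 hDr0 hDr1
    hrval0 hrval1 hrhat0 hrhat1 hmuhat rstar hrstar Δ hΔ ρ hρ rnux hrnux V hV Vhat hVhat hδΔ hδρ he
    hρmax hM
end

section
/- Fix a step t ≤ T of the DR-ns algorithm and a history z_{k−1} such that the k-th exploration sample begins the t-th block, inducing target history h_{t−1} and multiplier c_t. Define the bad event E_m = {(x,a) : c_t π_t(a|x) > μ_m(a|x)} and bias mass ε_m = P_{(x,a)∼π_t}[E_m] − P_{(x,a)∼μ_m}[E_m]/c_t, and assume 0 ≤ ε_m ≤ ε < 1 for all m. Then the total variation distance between the law of the accepted pair (x_{κ(t)}, a_{κ(t)}) under the algorithm and the target distribution π_t satisfies Σ_{x,a} |Pr_k[x_{κ(t)}=x, a_{κ(t)}=a] − π_t(x,a)| ≤ 2ε/(1−ε). -/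
/-!
Write `p = D ⊗ π_t` for the target law and `q_m = D ⊗ min(μ_m, c π_t)` for the sub-probability
law of "sample `m` is drawn and accepted", of mass `A_m = c (1 - ε_m)`. The accepted pair has
law `∑_m q_m w_m`, where `w_m = ∏_{j<m} (1 - A_j)` is the probability that the first `m` samples
are rejected. Since `∑_m A_m w_m = 1` telescopes, `p - Law = ∑_m (A_m p - q_m) w_m`. As
`0 ≤ q_m ≤ c p`, the defect `A_m p - q_m` has total variation at most
`2 (c - A_m) = 2 c ε_m ≤ 2 c ε`, while `w_m ≤ (1 - c (1 - ε))^m` gives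
`∑_m w_m ≤ 1 / (c (1 - ε))`.
-/

open Finset
open scoped Classical

namespace RejectionSampling

def survival (A : ℕ → ℝ) (m : ℕ) : ℝ := ∏ j ∈ range m, (1 - A j)

section Survival

variable {A : ℕ → ℝ} {a : ℝ}

lemma survival_nonneg (hA1 : ∀ m, A m ≤ 1) (m : ℕ) : 0 ≤ survival A m :=
  prod_nonneg fun j _ => sub_nonneg.2 (hA1 j)

lemma survival_le_pow (haA : ∀ m, a ≤ A m) (hA1 : ∀ m, A m ≤ 1) (m : ℕ) :
    survival A m ≤ (1 - a) ^ m := by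
  calc survival A m ≤ ∏ _j ∈ range m, (1 - a) :=
        prod_le_prod (fun j _ => sub_nonneg.2 (hA1 j)) fun j _ => by linarith [haA j]
    _ = (1 - a) ^ m := by rw [prod_const, card_range]

lemma sum_range_mul_survival (N : ℕ) :
    ∑ m ∈ range N, A m * survival A m = 1 - survival A N := by
  induction N with
  | zero => simp [survival]
  | succ N ih => rw [sum_range_succ, ih, survival, survival, prod_range_succ]; ring

variable (ha : 0 < a) (haA : ∀ m, a ≤ A m) (hA1 : ∀ m, A m ≤ 1)
include ha haA hA1

lemma tendsto_survival_zero : Filter.Tendsto (survival A) Filter.atTop (nhds 0) := by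
  have ha1 : a ≤ 1 := (haA 0).trans (hA1 0)
  exact squeeze_zero (survival_nonneg hA1) (survival_le_pow haA hA1)
    (tendsto_pow_atTop_nhds_zero_of_lt_one (by linarith) (by linarith))

lemma summable_survival : Summable (survival A) := by
  have ha1 : a ≤ 1 := (haA 0).trans (hA1 0)
  exact .of_nonneg_of_le (survival_nonneg hA1) (survival_le_pow haA hA1)
    (summable_geometric_of_lt_one (by linarith) (by linarith))

lemma hasSum_mul_survival : HasSum (fun m => A m * survival A m) 1 := by
  rw [hasSum_iff_tendsto_nat_of_nonneg
    (fun m => mul_nonneg (ha.le.trans (haA m)) (survival_nonneg hA1 m))]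
  simp_rw [sum_range_mul_survival]
  simpa using (tendsto_survival_zero ha haA hA1).const_sub 1

lemma tsum_survival_le : ∑' m, survival A m ≤ a⁻¹ := by
  have hAw := hasSum_mul_survival ha haA hA1
  have : a * ∑' m, survival A m ≤ 1 := by
    rw [← tsum_mul_left, ← hAw.tsum_eq]
    exact ((summable_survival ha haA hA1).mul_left a).tsum_le_tsum
      (fun m => mul_le_mul_of_nonneg_right (haA m) (survival_nonneg hA1 m)) hAw.summable
  rwa [← le_div_iff₀' ha, one_div] at this

end Survival

theorem sum_abs_tsum_mul_survival_sub_le {ι : Type*} [Fintype ι] {A : ℕ → ℝ} {a δ : ℝ}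
    (p : ι → ℝ) (q : ℕ → ι → ℝ) (ha : 0 < a) (haA : ∀ m, a ≤ A m) (hA1 : ∀ m, A m ≤ 1)
    (hq0 : ∀ m i, 0 ≤ q m i) (hqA : ∀ m, ∑ i, q m i = A m)
    (hδ : ∀ m, ∑ i, |A m * p i - q m i| ≤ δ) :
    ∑ i, |∑' m, q m i * survival A m - p i| ≤ δ / a := by
  have hw0 := survival_nonneg hA1
  have hw := summable_survival ha haA hA1
  have hq_summable (i : ι) : Summable fun m => q m i * survival A m := by
    refine .of_nonneg_of_le (fun m => mul_nonneg (hq0 m i) (hw0 m)) (fun m => ?_) hw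
    have hqi : q m i ≤ 1 :=
      (hqA m ▸ single_le_sum (fun j _ => hq0 m j) (mem_univ i)).trans (hA1 m)
    exact mul_le_of_le_one_left (hw0 m) hqi
  have hdefect_summable (i : ι) : Summable fun m => |A m * p i - q m i| * survival A m :=
    .of_nonneg_of_le (fun m => mul_nonneg (abs_nonneg _) (hw0 m))
      (fun m => mul_le_mul_of_nonneg_right
        ((single_le_sum (fun j _ => abs_nonneg (A m * p j - q m j)) (mem_univ i)).trans (hδ m))
        (hw0 m))
      (hw.mul_left δ)
  have hpoint (i : ι) :
      |∑' m, q m i * survival A m - p i| ≤ ∑' m, |A m * p i - q m i| * survival A m := by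
    have habs_defect (m : ℕ) :
        |(A m * p i - q m i) * survival A m| = |A m * p i - q m i| * survival A m := by
      rw [abs_mul, abs_of_nonneg (hw0 m)]
    have hdefect : ∑' m, (A m * p i - q m i) * survival A m =
        p i - ∑' m, q m i * survival A m := by
      have hAw := hasSum_mul_survival ha haA hA1
      calc ∑' m, (A m * p i - q m i) * survival A m
          = ∑' m, (A m * survival A m * p i - q m i * survival A m) :=
            tsum_congr fun m => by ring
        _ = (∑' m, A m * survival A m) * p i - ∑' m, q m i * survival A m := by
            rw [(hAw.summable.mul_right (p i)).tsum_sub (hq_summable i), tsum_mul_right]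
        _ = p i - ∑' m, q m i * survival A m := by rw [hAw.tsum_eq, one_mul]
    rw [abs_sub_comm, ← hdefect, ← Real.norm_eq_abs]
    refine (norm_tsum_le_tsum_norm ?_).trans_eq (tsum_congr fun m => habs_defect m)
    simpa only [Real.norm_eq_abs, habs_defect] using hdefect_summable i
  calc ∑ i, |∑' m, q m i * survival A m - p i|
      ≤ ∑ i, ∑' m, |A m * p i - q m i| * survival A m := sum_le_sum fun i _ => hpoint i
    _ = ∑' m, ∑ i, |A m * p i - q m i| * survival A m :=
      (Summable.tsum_finsetSum fun i _ => hdefect_summable i).symm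
    _ ≤ ∑' m, δ * survival A m :=
      (summable_sum fun i _ => hdefect_summable i).tsum_le_tsum
        (fun m => by rw [← sum_mul]; exact mul_le_mul_of_nonneg_right (hδ m) (hw0 m))
        (hw.mul_left δ)
    _ ≤ δ / a := by
      have hδ0 : 0 ≤ δ := (sum_nonneg fun i _ => abs_nonneg _).trans (hδ 0)
      rw [tsum_mul_left, div_eq_mul_inv]
      exact mul_le_mul_of_nonneg_left (tsum_survival_le ha haA hA1) hδ0

lemma sum_abs_sum_mul_sub_le {ι : Type*} [Fintype ι] {p q : ι → ℝ} {c : ℝ}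
    (hp0 : ∀ i, 0 ≤ p i) (hp1 : ∑ i, p i = 1) (hqp : ∀ i, q i ≤ c * p i) :
    ∑ i, |(∑ j, q j) * p i - q i| ≤ 2 * (c - ∑ i, q i) := by
  have hmissing : c - ∑ i, q i = ∑ i, (c * p i - q i) := by
    rw [sum_sub_distrib, ← mul_sum, hp1, mul_one]
  have hmissing0 : 0 ≤ c - ∑ i, q i := hmissing ▸ sum_nonneg fun i _ => sub_nonneg.2 (hqp i)
  calc ∑ i, |(∑ j, q j) * p i - q i|
      ≤ ∑ i, ((c * p i - q i) + (c - ∑ j, q j) * p i) := by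
        refine sum_le_sum fun i _ => abs_le.2 ⟨?_, ?_⟩ <;>
          nlinarith [hqp i, mul_nonneg hmissing0 (hp0 i)]
    _ = 2 * (c - ∑ i, q i) := by
      rw [sum_add_distrib, ← mul_sum, hp1, ← hmissing]; ring

lemma sum_sum_mul_min_eq {X A : Type*} [Fintype X] [Fintype A]
    (D : X → ℝ) (π μ : X → A → ℝ) {c : ℝ} (hc : c ≠ 0)
    (hDπ : ∑ x, ∑ a, D x * π x a = 1) :
    ∑ x, ∑ a, D x * min (μ x a) (c * π x a) =
      c * (1 - ((∑ x, ∑ a, if c * π x a > μ x a then D x * π x a else 0)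
        - (∑ x, ∑ a, if c * π x a > μ x a then D x * μ x a else 0) / c)) := by
  have hpoint (x : X) (a : A) : D x * min (μ x a) (c * π x a) =
      c * (D x * π x a) - c * (if c * π x a > μ x a then D x * π x a else 0)
        + (if c * π x a > μ x a then D x * μ x a else 0) := by
    split_ifs with h
    · rw [min_eq_left h.le]; ring
    · rw [min_eq_right (not_lt.1 h)]; ring
  simp_rw [hpoint, sum_add_distrib, sum_sub_distrib, ← mul_sum _ _ c, hDπ]
  field_simp
  ring

end RejectionSampling

open RejectionSampling

theorem stmt12_general {X A : Type*} [Fintype X] [Fintype A]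
    (D : X → ℝ) (pit : X → A → ℝ) (mu : ℕ → X → A → ℝ) (c ε : ℝ)
    (hD0 : ∀ x, 0 ≤ D x) (hD1 : ∑ x, D x = 1)
    (hpit0 : ∀ x a, 0 ≤ pit x a) (hpit1 : ∀ x, ∑ a, pit x a = 1)
    (hmu0 : ∀ m x a, 0 ≤ mu m x a)
    (hc : 0 < c) (hc1 : c ≤ 1) (hε : ε < 1)
    (accept : ℕ → X → A → ℝ)
    (haccept : ∀ m x a, accept m x a = D x * min (mu m x a) (c * pit x a))
    (Am : ℕ → ℝ) (hAm : ∀ m, Am m = ∑ x, ∑ a, accept m x a)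
    (eps : ℕ → ℝ)
    (heps : ∀ m, eps m =
      (∑ x, ∑ a, if c * pit x a > mu m x a then D x * pit x a else 0)
        - (∑ x, ∑ a, if c * pit x a > mu m x a then D x * mu m x a else 0) / c)
    (hepsb : ∀ m, 0 ≤ eps m ∧ eps m ≤ ε)
    (Law : X → A → ℝ)
    (hLaw : ∀ x a, Law x a =
      ∑' m : ℕ, accept m x a * ∏ j ∈ Finset.range m, (1 - Am j)) :
    ∑ x, ∑ a, |Law x a - D x * pit x a| ≤ 2 * ε / (1 - ε) := by
  have hp1 : ∑ x, ∑ a, D x * pit x a = 1 := by simp_rw [← mul_sum, hpit1, mul_one, hD1]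
  have hAm_eq (m : ℕ) : Am m = c * (1 - eps m) := by
    simp_rw [hAm, haccept, heps, sum_sum_mul_min_eq D pit (mu m) hc.ne' hp1]
  have hq0 (m : ℕ) (i : X × A) : 0 ≤ accept m i.1 i.2 := by
    rw [haccept]
    exact mul_nonneg (hD0 _) (le_min (hmu0 ..) (mul_nonneg hc.le (hpit0 ..)))
  have hq_le (m : ℕ) (i : X × A) : accept m i.1 i.2 ≤ c * (D i.1 * pit i.1 i.2) := by
    rw [haccept, mul_left_comm]
    exact mul_le_mul_of_nonneg_left (min_le_right _ _) (hD0 _)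
  have hqA (m : ℕ) : ∑ i : X × A, accept m i.1 i.2 = Am m := by
    rw [Fintype.sum_prod_type', hAm]
  have hAm_lb (m : ℕ) : c * (1 - ε) ≤ Am m := by rw [hAm_eq]; nlinarith [(hepsb m).2]
  have hAm_le (m : ℕ) : Am m ≤ 1 := by rw [hAm_eq]; nlinarith [(hepsb m).1]
  have hdefect (m : ℕ) :
      ∑ i : X × A, |Am m * (D i.1 * pit i.1 i.2) - accept m i.1 i.2| ≤ 2 * c * ε := by
    have h := sum_abs_sum_mul_sub_le (fun i : X × A => mul_nonneg (hD0 i.1) (hpit0 i.1 i.2))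
      (by simpa only [Fintype.sum_prod_type] using hp1) (hq_le m)
    rw [hqA] at h
    refine h.trans ?_
    rw [hAm_eq]
    nlinarith [mul_le_mul_of_nonneg_left (hepsb m).2 hc.le]
  have key := sum_abs_tsum_mul_survival_sub_le _ _ (mul_pos hc (sub_pos.2 hε)) hAm_lb hAm_le
    hq0 hqA hdefect
  simp only [Fintype.sum_prod_type] at key
  simp_rw [hLaw]
  exact key.trans_eq (by field_simp)

/-- Total variation bound for the law of the accepted pair in the rejection sampling
step of DR-ns (first part of Lemma 5.2): the accepted context-action pair is within
total variation `2ε/(1−ε)` of the target distribution `π_t`. -/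
theorem stmt12 {X A : Type*} [Fintype X] [Fintype A]
    (D : X → ℝ) (pit : X → A → ℝ) (mu : ℕ → X → A → ℝ) (c ε : ℝ)
    (hD0 : ∀ x, 0 ≤ D x) (hD1 : ∑ x, D x = 1)
    (hpit0 : ∀ x a, 0 ≤ pit x a) (hpit1 : ∀ x, ∑ a, pit x a = 1)
    (hmu0 : ∀ m x a, 0 ≤ mu m x a) (hmu1 : ∀ m x, ∑ a, mu m x a = 1)
    (hc : 0 < c) (hc1 : c ≤ 1) (hε : ε < 1)
    (accept : ℕ → X → A → ℝ)
    (haccept : ∀ m x a, accept m x a = D x * min (mu m x a) (c * pit x a))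
    (Am : ℕ → ℝ) (hAm : ∀ m, Am m = ∑ x, ∑ a, accept m x a)
    (eps : ℕ → ℝ)
    (heps : ∀ m, eps m =
      (∑ x, ∑ a, if c * pit x a > mu m x a then D x * pit x a else 0)
        - (∑ x, ∑ a, if c * pit x a > mu m x a then D x * mu m x a else 0) / c)
    (hepsb : ∀ m, 0 ≤ eps m ∧ eps m ≤ ε)
    (Law : X → A → ℝ)
    (hLaw : ∀ x a, Law x a =
      ∑' m : ℕ, accept m x a * ∏ j ∈ Finset.range m, (1 - Am j)) :
    ∑ x, ∑ a, |Law x a - D x * pit x a| ≤ 2 * ε / (1 - ε) :=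
  stmt12_general D pit mu c ε hD0 hD1 hpit0 hpit1 hmu0 hc hc1 hε accept haccept Am hAm eps heps
    hepsb Law hLaw
end

section
/- Under the same setup and bias-mass bound 0 ≤ ε_m ≤ ε < 1, the weighted block estimate satisfies | c_t · E_k[ V̂_{B(t)} ] − E^π_t[r] | ≤ ε/(1−ε), where V̂_{B(t)} = Σ_{m ∈ B(t)} V̂_m is the sum of doubly robust per-sample terms over the t-th block B(t) (all exploration samples processed while simulating step t), each V̂_m being conditionally unbiased for E^π_t[r] given z_{m−1}. -/
/-!
Each sample of block `t` is accepted with overall probability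
`A_m = E[min (μ_m, c π_t)] = c (1 - ε_m) ∈ [c (1 - ε), c]`, so the probability that the block reaches
its `m`-th sample is a product of `m` factors in `[1 - c, 1 - c (1 - ε)]`. Summing the geometric
bounds, the expected block length `S` satisfies `1 ≤ c S ≤ 1 / (1 - ε)`; by unbiasedness
`E_k[V̂_{B(t)}] = S · E^π_t[r]`, and `E^π_t[r] ∈ [0, 1]` gives `|c S V - V| ≤ (c S - 1) ≤ ε / (1 - ε)`.
-/

open Finset
open scoped Classical

lemma min_eq_sub_ite (u v : ℝ) : min u v = v - if v > u then v - u else 0 := by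
  split_ifs with h
  · rw [min_eq_left h.le]; ring
  · rw [min_eq_right (not_lt.mp h)]; ring

lemma sum_mul_min_eq_mul_one_sub {X A : Type*} [Fintype X] [Fintype A]
    (D : X → ℝ) (p q : X → A → ℝ) {c : ℝ} (hc : c ≠ 0)
    (hD1 : ∑ x, D x = 1) (hp1 : ∀ x, ∑ a, p x a = 1) :
    ∑ x, ∑ a, D x * min (q x a) (c * p x a) =
      c * (1 - ((∑ x, ∑ a, if c * p x a > q x a then D x * p x a else 0)
        - (∑ x, ∑ a, if c * p x a > q x a then D x * q x a else 0) / c)) := by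
  have hmass : ∑ x, ∑ a, D x * p x a = 1 := by
    simp only [← mul_sum, hp1, mul_one, hD1]
  have hsplit : ∑ x, ∑ a, D x * min (q x a) (c * p x a) =
      c * (∑ x, ∑ a, D x * p x a)
        - c * (∑ x, ∑ a, if c * p x a > q x a then D x * p x a else 0)
        + (∑ x, ∑ a, if c * p x a > q x a then D x * q x a else 0) := by
    simp only [mul_sum, ← sum_sub_distrib, ← sum_add_distrib]
    refine sum_congr rfl fun x _ => sum_congr rfl fun a _ => ?_
    rw [min_eq_sub_ite]
    split_ifs <;> ring
  rw [hsplit, hmass]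
  field_simp
  ring

lemma prod_range_one_sub_le_pow {a : ℕ → ℝ} {b : ℝ} (hb : ∀ j, b ≤ a j) (ha : ∀ j, a j ≤ 1)
    (m : ℕ) : ∏ j ∈ range m, (1 - a j) ≤ (1 - b) ^ m := by
  calc ∏ j ∈ range m, (1 - a j) ≤ ∏ _j ∈ range m, (1 - b) :=
        prod_le_prod (fun j _ => sub_nonneg.mpr (ha j)) (fun j _ => by linarith [hb j])
    _ = (1 - b) ^ m := by rw [prod_const, card_range]

lemma pow_le_prod_range_one_sub {a : ℕ → ℝ} {b : ℝ} (hb : ∀ j, a j ≤ b) (hb1 : b ≤ 1)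
    (m : ℕ) : (1 - b) ^ m ≤ ∏ j ∈ range m, (1 - a j) := by
  calc (1 - b) ^ m = ∏ _j ∈ range m, (1 - b) := by rw [prod_const, card_range]
    _ ≤ ∏ j ∈ range m, (1 - a j) :=
        prod_le_prod (fun _ _ => sub_nonneg.mpr hb1) (fun j _ => by linarith [hb j])

lemma tsum_prod_range_one_sub_mem_Icc {a : ℕ → ℝ} {lo hi : ℝ} (hlo : 0 < lo) (hhi : hi ≤ 1)
    (ha : ∀ j, lo ≤ a j ∧ a j ≤ hi) :
    hi⁻¹ ≤ ∑' m, ∏ j ∈ range m, (1 - a j) ∧ ∑' m, ∏ j ∈ range m, (1 - a j) ≤ lo⁻¹ := by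
  have hlohi : lo ≤ hi := (ha 0).1.trans (ha 0).2
  have ha1 : ∀ j, a j ≤ 1 := fun j => (ha j).2.trans hhi
  have hupper := prod_range_one_sub_le_pow (fun j => (ha j).1) ha1
  have hlower := pow_le_prod_range_one_sub (fun j => (ha j).2) hhi
  have hgeom_lo : Summable fun m : ℕ => (1 - lo) ^ m :=
    summable_geometric_of_lt_one (by linarith) (by linarith)
  have hgeom_hi : Summable fun m : ℕ => (1 - hi) ^ m :=
    summable_geometric_of_lt_one (by linarith) (by linarith)
  have hsum : Summable fun m : ℕ => ∏ j ∈ range m, (1 - a j) :=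
    hgeom_lo.of_nonneg_of_le (fun m => (pow_nonneg (by linarith) m).trans (hlower m)) hupper
  constructor
  · calc hi⁻¹ = ∑' m : ℕ, (1 - hi) ^ m := by
          rw [tsum_geometric_of_lt_one (by linarith) (by linarith), sub_sub_cancel]
      _ ≤ _ := hgeom_hi.tsum_le_tsum hlower hsum
  · calc ∑' m, ∏ j ∈ range m, (1 - a j) ≤ ∑' m : ℕ, (1 - lo) ^ m :=
          hsum.tsum_le_tsum hupper hgeom_lo
      _ = lo⁻¹ := by rw [tsum_geometric_of_lt_one (by linarith) (by linarith), sub_sub_cancel]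

lemma sum_mul_mul_mul_mem_Icc {X A R : Type*} [Fintype X] [Fintype A] [Fintype R]
    (D : X → ℝ) (p : X → A → ℝ) (Dr : X → A → R → ℝ) (v : R → ℝ)
    (hD0 : ∀ x, 0 ≤ D x) (hD1 : ∑ x, D x = 1)
    (hp0 : ∀ x a, 0 ≤ p x a) (hp1 : ∀ x, ∑ a, p x a = 1)
    (hDr0 : ∀ x a r, 0 ≤ Dr x a r) (hDr1 : ∀ x a, ∑ r, Dr x a r = 1)
    (hv0 : ∀ r, 0 ≤ v r) (hv1 : ∀ r, v r ≤ 1) :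
    0 ≤ ∑ x, ∑ a, ∑ r, D x * (p x a * (Dr x a r * v r)) ∧
      ∑ x, ∑ a, ∑ r, D x * (p x a * (Dr x a r * v r)) ≤ 1 := by
  constructor
  · exact sum_nonneg fun x _ => sum_nonneg fun a _ => sum_nonneg fun r _ =>
      mul_nonneg (hD0 x) (mul_nonneg (hp0 x a) (mul_nonneg (hDr0 x a r) (hv0 r)))
  · calc ∑ x, ∑ a, ∑ r, D x * (p x a * (Dr x a r * v r))
        ≤ ∑ x, ∑ a, ∑ r, D x * (p x a * Dr x a r) :=
          sum_le_sum fun x _ => sum_le_sum fun a _ => sum_le_sum fun r _ =>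
            mul_le_mul_of_nonneg_left (mul_le_mul_of_nonneg_left
              (mul_le_of_le_one_right (hDr0 x a r) (hv1 r)) (hp0 x a)) (hD0 x)
      _ = 1 := by simp only [← mul_sum, hDr1, mul_one, hp1, hD1]

lemma abs_mul_sub_self_le_div_one_sub {s v ε : ℝ} (hε : ε < 1) (hs1 : 1 ≤ s)
    (hs2 : s ≤ (1 - ε)⁻¹) (hv0 : 0 ≤ v) (hv1 : v ≤ 1) :
    |s * v - v| ≤ ε / (1 - ε) := by
  have hfrac : ε / (1 - ε) = (1 - ε)⁻¹ - 1 := by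
    field_simp [(sub_pos.mpr hε).ne']
    ring
  rw [hfrac, abs_of_nonneg (by nlinarith)]
  nlinarith

theorem stmt13_general {X A R : Type*} [Fintype X] [Fintype A] [Fintype R]
    (D : X → ℝ) (pit : X → A → ℝ) (mu : ℕ → X → A → ℝ)
    (Dr : X → A → R → ℝ) (rval : R → ℝ) (c ε : ℝ)
    (hD0 : ∀ x, 0 ≤ D x) (hD1 : ∑ x, D x = 1)
    (hpit0 : ∀ x a, 0 ≤ pit x a) (hpit1 : ∀ x, ∑ a, pit x a = 1)
    (hDr0 : ∀ x a r, 0 ≤ Dr x a r) (hDr1 : ∀ x a, ∑ r, Dr x a r = 1)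
    (hrval0 : ∀ r, 0 ≤ rval r) (hrval1 : ∀ r, rval r ≤ 1)
    (hc : 0 < c) (hc1 : c ≤ 1) (hε : ε < 1)
    (Vhat : ℕ → X → A → R → ℝ)
    (Vpi : ℝ) (hVpi : Vpi = ∑ x, ∑ a, ∑ r, D x * (pit x a * (Dr x a r * rval r)))
    -- conditional unbiasedness of each per-sample DR term (perfect logging)
    (hunbiased : ∀ m,
      ∑ x, ∑ a, ∑ r, D x * (mu m x a * (Dr x a r * Vhat m x a r)) = Vpi)
    (Am : ℕ → ℝ)
    (hAm : ∀ m, Am m = ∑ x, ∑ a, D x * min (mu m x a) (c * pit x a))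
    (eps : ℕ → ℝ)
    (heps : ∀ m, eps m =
      (∑ x, ∑ a, if c * pit x a > mu m x a then D x * pit x a else 0)
        - (∑ x, ∑ a, if c * pit x a > mu m x a then D x * mu m x a else 0) / c)
    (hepsb : ∀ m, 0 ≤ eps m ∧ eps m ≤ ε)
    (EVB : ℝ)
    (hEVB : EVB = ∑' m : ℕ, (∏ j ∈ Finset.range m, (1 - Am j)) *
      (∑ x, ∑ a, ∑ r, D x * (mu m x a * (Dr x a r * Vhat m x a r)))) :
    |c * EVB - Vpi| ≤ ε / (1 - ε) := by
  have hAm_eq : ∀ m, Am m = c * (1 - eps m) := fun m => by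
    rw [hAm, heps, sum_mul_min_eq_mul_one_sub D pit (mu m) hc.ne' hD1 hpit1]
  have hAm_mem : ∀ m, c * (1 - ε) ≤ Am m ∧ Am m ≤ c := fun m => by
    obtain ⟨h0, hle⟩ := hepsb m
    rw [hAm_eq]
    constructor <;> nlinarith
  obtain ⟨hS_ge, hS_le⟩ :=
    tsum_prod_range_one_sub_mem_Icc (mul_pos hc (sub_pos.mpr hε)) hc1 hAm_mem
  set S := ∑' m, ∏ j ∈ range m, (1 - Am j)
  have hEVB_eq : EVB = S * Vpi := by
    simp only [hEVB, hunbiased, tsum_mul_right, S]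
  obtain ⟨hV0, hV1⟩ := hVpi ▸
    sum_mul_mul_mul_mem_Icc D pit Dr rval hD0 hD1 hpit0 hpit1 hDr0 hDr1 hrval0 hrval1
  have hcS_ge : 1 ≤ c * S := by
    simpa [hc.ne'] using mul_le_mul_of_nonneg_left hS_ge hc.le
  have hcS_le : c * S ≤ (1 - ε)⁻¹ := by
    calc c * S ≤ c * (c * (1 - ε))⁻¹ := mul_le_mul_of_nonneg_left hS_le hc.le
      _ = (1 - ε)⁻¹ := by rw [mul_inv, ← mul_assoc, mul_inv_cancel₀ hc.ne', one_mul]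
  rw [hEVB_eq, ← mul_assoc]
  exact abs_mul_sub_self_le_div_one_sub hε hcS_ge hcS_le hV0 hV1

/-- Second part of Lemma 5.2: the weighted block estimate of DR-ns satisfies
`|c_t · E_k[V̂_{B(t)}] − E^π_t[r]| ≤ ε/(1−ε)`. -/
theorem stmt13 {X A R : Type*} [Fintype X] [Fintype A] [Fintype R]
    (D : X → ℝ) (pit : X → A → ℝ) (mu : ℕ → X → A → ℝ)
    (Dr : X → A → R → ℝ) (rval : R → ℝ) (rhat : X → A → ℝ) (c ε : ℝ)
    (hD0 : ∀ x, 0 ≤ D x) (hD1 : ∑ x, D x = 1)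
    (hpit0 : ∀ x a, 0 ≤ pit x a) (hpit1 : ∀ x, ∑ a, pit x a = 1)
    (hmu0 : ∀ m x a, 0 ≤ mu m x a) (hmu1 : ∀ m x, ∑ a, mu m x a = 1)
    (hmupos : ∀ m x a, 0 < pit x a → 0 < mu m x a)
    (hDr0 : ∀ x a r, 0 ≤ Dr x a r) (hDr1 : ∀ x a, ∑ r, Dr x a r = 1)
    (hrval0 : ∀ r, 0 ≤ rval r) (hrval1 : ∀ r, rval r ≤ 1)
    (hrhat0 : ∀ x a, 0 ≤ rhat x a) (hrhat1 : ∀ x a, rhat x a ≤ 1)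
    (hc : 0 < c) (hc1 : c ≤ 1) (hε : ε < 1)
    (Vhat : ℕ → X → A → R → ℝ)
    (hVhat : ∀ m x a r, Vhat m x a r =
      (∑ a', pit x a' * rhat x a') + (pit x a / mu m x a) * (rval r - rhat x a))
    (Vpi : ℝ) (hVpi : Vpi = ∑ x, ∑ a, ∑ r, D x * (pit x a * (Dr x a r * rval r)))
    -- conditional unbiasedness of each per-sample DR term (perfect logging)
    (hunbiased : ∀ m,
      ∑ x, ∑ a, ∑ r, D x * (mu m x a * (Dr x a r * Vhat m x a r)) = Vpi)
    (Am : ℕ → ℝ)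
    (hAm : ∀ m, Am m = ∑ x, ∑ a, D x * min (mu m x a) (c * pit x a))
    (eps : ℕ → ℝ)
    (heps : ∀ m, eps m =
      (∑ x, ∑ a, if c * pit x a > mu m x a then D x * pit x a else 0)
        - (∑ x, ∑ a, if c * pit x a > mu m x a then D x * mu m x a else 0) / c)
    (hepsb : ∀ m, 0 ≤ eps m ∧ eps m ≤ ε)
    (EVB : ℝ)
    (hEVB : EVB = ∑' m : ℕ, (∏ j ∈ Finset.range m, (1 - Am j)) *
      (∑ x, ∑ a, ∑ r, D x * (mu m x a * (Dr x a r * Vhat m x a r)))) :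
    |c * EVB - Vpi| ≤ ε / (1 - ε) :=
  stmt13_general D pit mu Dr rval c ε hD0 hD1 hpit0 hpit1 hDr0 hDr1 hrval0 hrval1 hc hc1 hε Vhat Vpi
    hVpi hunbiased Am hAm eps heps hepsb EVB hEVB
end

section
/- In the rejection sampling block analysis, with acceptance probability of sample m equal to min{1, c_t π_t(a_m|x_m)/μ_m(a_m|x_m)}, the marginal probability of accepting sample m (summing over contexts and actions) equals c_t(1 − ε_m), where ε_m = P_{(x,a)∼π_t}[E_m] − P_{(x,a)∼μ_m}[E_m]/c_t and E_m = {(x,a): c_t π_t(a|x) > μ_m(a|x)}. -/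
theorem min_eq_sub_ite_sub {α : Type*} [AddCommGroup α] [LinearOrder α] [IsOrderedAddMonoid α]
    (m q : α) : min m q = q - if m < q then q - m else 0 := by
  split_ifs with h
  · simp [min_eq_left h.le]
  · simp [min_eq_right (not_lt.mp h)]

theorem stmt17_general {X A : Type*} [Fintype X] [Fintype A]
    (D : X → ℝ) (pit : X → A → ℝ) (mu : X → A → ℝ) (c : ℝ)
    (hD1 : ∑ x, D x = 1)
    (hpit1 : ∀ x, ∑ a, pit x a = 1)
    (hc : 0 < c)
    (eps : ℝ)
    (heps : eps = (∑ x, ∑ a, if c * pit x a > mu x a then D x * pit x a else 0)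
        - (∑ x, ∑ a, if c * pit x a > mu x a then D x * mu x a else 0) / c) :
    ∑ x, ∑ a, D x * min (mu x a) (c * pit x a) = c * (1 - eps) := by
  have hsplit : ∀ x a, D x * min (mu x a) (c * pit x a) = c * (D x * pit x a)
      - (c * (if c * pit x a > mu x a then D x * pit x a else 0)
        - if c * pit x a > mu x a then D x * mu x a else 0) := by
    intro x a
    rw [min_eq_sub_ite_sub]
    split_ifs <;> ring
  simp only [hsplit, Finset.sum_sub_distrib, ← Finset.mul_sum, hpit1, mul_one, hD1, heps]
  field_simp

/-- Marginal acceptance probability in the rejection sampling step of DR-ns: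
`Σ_{x,a} accept_m(x,a) = c_t(1 − ε_m)` where `accept_m(x,a) = min{μ_m(x,a), c π_t(x,a)}`
(joint with the context distribution `D`). -/
theorem stmt17 {X A : Type*} [Fintype X] [Fintype A]
    (D : X → ℝ) (pit : X → A → ℝ) (mu : X → A → ℝ) (c : ℝ)
    (hD0 : ∀ x, 0 ≤ D x) (hD1 : ∑ x, D x = 1)
    (hpit0 : ∀ x a, 0 ≤ pit x a) (hpit1 : ∀ x, ∑ a, pit x a = 1)
    (hmu0 : ∀ x a, 0 ≤ mu x a) (hmu1 : ∀ x, ∑ a, mu x a = 1)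
    (hc : 0 < c) (hc1 : c ≤ 1)
    (eps : ℝ)
    (heps : eps = (∑ x, ∑ a, if c * pit x a > mu x a then D x * pit x a else 0)
        - (∑ x, ∑ a, if c * pit x a > mu x a then D x * mu x a else 0) / c) :
    ∑ x, ∑ a, D x * min (mu x a) (c * pit x a) = c * (1 - eps) :=
  stmt17_general D pit mu c hD1 hpit1 hc eps heps
end
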